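/- arXiv:0708.4036 — 4 statements merged into one kernel-verified Lean document; each statement's English description precedes it below -/
import Mathlib

section
/- For every region F, both δ(F) and δ'(F) are antichains in Δ⁺. Moreover, the correspondences F ↦ δ(F) and F ↦ δ'(F) are bijections between the set of regions and the set of antichains of positive roots. -/
open scoped RealInnerProductSpace

/-- A finite reduced crystallographic root system spanning a real inner
product space `V` (whose inner product is automatically invariant under the
Weyl group, since the reflections are isometries), together with a fixed
system of positive roots and the corresponding simple roots. -/
structure RootSystemData (V : Type)
    [NormedAddCommGroup V] [InnerProductSpace ℝ V] : Type where
  roots : Finset V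
  pos : Finset V
  simples : Finset V
  zero_not_mem : (0 : V) ∉ roots
  span_roots : Submodule.span ℝ (roots : Set V) = ⊤
  crystallographic : ∀ α ∈ roots, ∀ β ∈ roots,
    ∃ n : ℤ, 2 * ⟪α, β⟫ = (n : ℝ) * ⟪β, β⟫
  reduced : ∀ α ∈ roots, ∀ t : ℝ, t • α ∈ roots → t = 1 ∨ t = -1
  reflect_mem : ∀ α ∈ roots, ∀ β ∈ roots,
    β - (2 * ⟪β, α⟫ / ⟪α, α⟫) • α ∈ roots
  pos_subset : pos ⊆ roots
  mem_pos_or_neg_mem_pos : ∀ α ∈ roots, α ∈ pos ∨ -α ∈ pos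
  neg_not_pos : ∀ α ∈ pos, -α ∉ pos
  simples_subset : simples ⊆ pos
  simples_linearIndependent : LinearIndependent ℝ (fun α : simples => (α : V))
  pos_sum_of_simples : ∀ β ∈ pos, ∃ c : V →₀ ℕ,
    (c.support : Set V) ⊆ (simples : Set V) ∧ β = c.sum fun α n => (n : ℝ) • α

namespace RootSystemData

variable {V : Type} [NormedAddCommGroup V] [InnerProductSpace ℝ V]
variable (R : RootSystemData V)

/-- `β₁ > β₂` : the difference `β₁ - β₂` is a nonempty sum of positive roots. -/
def Gt (x y : V) : Prop :=
  ∃ m : Multiset V, m ≠ 0 ∧ (∀ z ∈ m, z ∈ R.pos) ∧ x - y = m.sum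

/-- `β₁ ≥ β₂` : either `β₁ > β₂` or `β₁ = β₂`. -/
def Ge (x y : V) : Prop := R.Gt x y ∨ x = y

/-- An antichain: a set of pairwise incomparable positive roots. -/
def IsRootAntichain (A : Set V) : Prop :=
  A ⊆ (R.pos : Set V) ∧ ∀ x ∈ A, ∀ y ∈ A, x ≠ y → ¬ R.Ge x y ∧ ¬ R.Ge y x

/-- An orthogonal antichain: an antichain of pairwise orthogonal positive roots. -/
def IsOrthAntichain (A : Set V) : Prop :=
  R.IsRootAntichain A ∧ ∀ x ∈ A, ∀ y ∈ A, x ≠ y → ⟪x, y⟫ = 0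

/-- The complement, inside the open dominant Weyl chamber, of the hyperplane
arrangement `⟨β,·⟩ = 1`, `β ∈ Δ⁺`. -/
def chamberSet : Set V :=
  {χ | (∀ α ∈ R.simples, 0 < ⟪α, χ⟫) ∧ ∀ β ∈ R.pos, ⟪β, χ⟫ ≠ 1}

/-- A region: a connected component of `chamberSet`. -/
def IsRegion (F : Set V) : Prop :=
  ∃ χ ∈ R.chamberSet, F = connectedComponentIn R.chamberSet χ

/-- The positive roots `β` with `⟨β,·⟩ < 1` on `F`. -/
def ltOne (F : Set V) : Set V := {β | β ∈ R.pos ∧ ∀ χ ∈ F, ⟪β, χ⟫ < 1}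

/-- The positive roots `β` with `⟨β,·⟩ > 1` on `F`. -/
def gtOne (F : Set V) : Set V := {β | β ∈ R.pos ∧ ∀ χ ∈ F, 1 < ⟪β, χ⟫}

/-- `δ(F)`: the maximal roots among the positive roots `β` with `⟨β,·⟩ < 1` on `F`. -/
def deltaLow (F : Set V) : Set V :=
  {β | β ∈ R.ltOne F ∧ ∀ β' ∈ R.ltOne F, ¬ R.Gt β' β}

/-- `δ'(F)`: the minimal roots among the positive roots `β` with `⟨β,·⟩ > 1` on `F`. -/
def deltaHigh (F : Set V) : Set V :=
  {β | β ∈ R.gtOne F ∧ ∀ β' ∈ R.gtOne F, ¬ R.Gt β β'}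

/-- Simply laced: all roots have the same length, normalized so `⟨β,β⟩ = 2`. -/
def SimplyLaced : Prop := ∀ β ∈ R.roots, ⟪β, β⟫ = 2

/-- Irreducibility: the set of roots admits no nontrivial partition into two
mutually orthogonal parts. -/
def IsIrreducible : Prop :=
  ∀ S : Set V, S ⊆ (R.roots : Set V) →
    (∀ a ∈ S, ∀ b ∈ (R.roots : Set V) \ S, ⟪a, b⟫ = 0) →
    S = ∅ ∨ S = (R.roots : Set V)

/-- The height of a positive root: the sum of its (unique) coordinates in the
simple roots. -/
noncomputable def height (β : V) : ℕ :=
  letI := Classical.propDecidable (∃ c : V →₀ ℕ, (c.support : Set V) ⊆ (R.simples : Set V) ∧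
      β = c.sum (fun α n => (n : ℝ) • α))
  if h : ∃ c : V →₀ ℕ, (c.support : Set V) ⊆ (R.simples : Set V) ∧
      β = c.sum (fun α n => (n : ℝ) • α)
  then (Classical.choose h).sum fun _ n => n
  else 0

/-- The root system has the Cartan–Killing type given by the (simply laced)
Cartan matrix `A`: there is an indexing of the simple roots under which, in the
normalization `⟨β,β⟩ = 2`, the inner products of simple roots are the entries
of `A`. -/
def HasType {n : ℕ} (A : Matrix (Fin n) (Fin n) ℤ) : Prop :=
  ∃ e : Fin n ≃ {x // x ∈ R.simples},
    ∀ i j, ⟪((e i : V)), ((e j : V))⟫ = (A i j : ℝ)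

/-- The reflections `s_β`, `β ∈ S`, as linear isometries of `V`. -/
def reflectionsOn (S : Set V) : Set (V ≃ₗᵢ[ℝ] V) :=
  {g | ∃ β ∈ S, ∀ v, g v = v - (2 * ⟪v, β⟫ / ⟪β, β⟫) • β}

/-- The Weyl group `W`, generated by the reflections in all roots. -/
def weyl : Subgroup (V ≃ₗᵢ[ℝ] V) :=
  Subgroup.closure (reflectionsOn (R.roots : Set V))

/-- The reflection subgroup generated by the reflections `s_β`, `β ∈ S`. -/
def weylOf (S : Set V) : Subgroup (V ≃ₗᵢ[ℝ] V) :=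
  Subgroup.closure (reflectionsOn S)

/-- `Δ_S = Δ ∩ span_ℝ(S)`. -/
def rootsIn (S : Set V) : Set V :=
  {β | β ∈ R.roots ∧ β ∈ Submodule.span ℝ S}

/-- `Δ_S⁺ = Δ⁺ ∩ span_ℝ(S)`. -/
def posIn (S : Set V) : Set V :=
  {β | β ∈ R.pos ∧ β ∈ Submodule.span ℝ S}

/-- The inversion set `N(w) = {β ∈ Δ⁺ : w(β) ∈ -Δ⁺}`. -/
def inversionSet (w : V ≃ₗᵢ[ℝ] V) : Set V :=
  {β | β ∈ R.pos ∧ -(w β) ∈ R.pos}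

end RootSystemData

/-!
A region `F` is determined by the lower set `L = {β ∈ Δ⁺ | ⟪β, ·⟫ < 1 on F}` of the root poset:
it is the convex set of dominant `χ` with `⟪β, χ⟫ < 1` exactly for `β ∈ L`. Then `δ(F)` is the
set of maximal elements of `L` and `δ'(F)` that of minimal elements of `Δ⁺ \ L`, and lower sets
correspond to antichains in both ways.

The substance is that every lower set `L` occurs, i.e. that some dominant `χ` has
`⟪γ, χ⟫ < 1 < ⟪β, χ⟫` for all `γ ∈ L`, `β ∈ Δ⁺ \ L`. By Hahn–Banach this can only fail if `0` is
a convex combination of simple roots and differences `β - γ`. These are lattice points, so by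
Carathéodory and Cramer's rule the coefficients may be taken rational, and clearing denominators
gives multisets `X ⊆ Δ⁺ \ L` and `Y ⊆ L` of the same size and `N ⊆ Π` with `ΣX + ΣN = ΣY`.
An exchange argument shows that such a relation forces `|X| < |Y|`: some `z ∈ X + N` and
`γ ∈ Y` make an acute angle, so `z = γ` or one of `z - γ`, `γ - z` is a positive root, and
cancelling `z` against `γ` lowers the total height of `Y`.
-/

/-! ### Lattice points, convex hulls and separation -/

section LinearAlgebra

open Matrix

theorem Matrix.exists_int_mul_eq_intCast_of_mulVec_eq {m n : Type*} [Fintype m] [Fintype n]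
    [DecidableEq n] (A : Matrix m n ℤ) (hA : Function.Injective (A.map (Int.cast : ℤ → ℝ)).mulVec)
    (b : m → ℤ) {x : n → ℝ} (hx : A.map (Int.cast : ℤ → ℝ) *ᵥ x = fun i => (b i : ℝ)) :
    ∃ d : ℤ, d ≠ 0 ∧ ∀ j, ∃ z : ℤ, (d : ℝ) * x j = z := by
  -- Cramer's rule for the Gram matrix `G = Aᵀ * A`, invertible as `A` is injective:
  -- `det G • x = adj G *ᵥ Aᵀ *ᵥ b` is an integer vector.
  set f := Int.castRingHom ℝ
  set G := Aᵀ * A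
  have hG : f.mapMatrix G = (A.map f)ᵀ * A.map f := by
    simp only [G, RingHom.mapMatrix_apply, Matrix.map_mul, Matrix.transpose_map]
  have hdet : G.det ≠ 0 := by
    intro h0
    obtain ⟨y, hy0, hy⟩ := Matrix.exists_mulVec_eq_zero_iff.mpr
      (show (f.mapMatrix G).det = 0 by rw [← RingHom.map_det, h0, map_zero])
    rw [hG, ← mulVec_mulVec] at hy
    have hAy : A.map f *ᵥ y = 0 := by
      rw [← dotProduct_self_eq_zero]
      calc (A.map f *ᵥ y) ⬝ᵥ (A.map f *ᵥ y) = y ⬝ᵥ ((A.map f)ᵀ *ᵥ (A.map f *ᵥ y)) := by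
            rw [dotProduct_mulVec y, vecMul_transpose]
        _ = 0 := by rw [hy, dotProduct_zero]
    exact hy0 (hA (hAy.trans (mulVec_zero _).symm))
  refine ⟨G.det, hdet, fun j => ⟨(G.adjugate *ᵥ (Aᵀ *ᵥ b)) j, ?_⟩⟩
  have hcramer : (G.det : ℝ) • x = (G.adjugate).map f *ᵥ ((Aᵀ).map f *ᵥ (f ∘ b)) := by
    rw [← RingHom.mapMatrix_apply, RingHom.map_adjugate, Matrix.transpose_map,
      ← show A.map f *ᵥ x = f ∘ b from hx, mulVec_mulVec, mulVec_mulVec, Matrix.mul_assoc, ← hG,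
      adjugate_mul, smul_mulVec, one_mulVec, ← RingHom.map_det]
    rfl
  have hb : (Aᵀ).map f *ᵥ (f ∘ b) = f ∘ (Aᵀ *ᵥ b) :=
    funext fun i => (RingHom.map_mulVec f _ _ i).symm
  rw [← smul_eq_mul, ← Pi.smul_apply, hcramer, hb, ← RingHom.map_mulVec]
  rfl

theorem exists_int_mul_eq_intCast_of_affineIndependent {V ι κ : Type*} [AddCommGroup V]
    [Module ℝ V] [Fintype ι] [Finite κ] (b : Module.Basis κ ℝ V) {p : ι → V}
    (hp : AffineIndependent ℝ p) (hpb : ∀ i, p i ∈ Submodule.span ℤ (Set.range b)) {w : ι → ℝ}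
    (hw1 : ∑ i, w i = 1) (hw0 : ∑ i, w i • p i = 0) :
    ∃ d : ℤ, d ≠ 0 ∧ ∀ i, ∃ z : ℤ, (d : ℝ) * w i = z := by
  classical
  have := Fintype.ofFinite κ
  choose c hc using fun i k => (b.mem_span_iff_repr_mem ℤ (p i)).1 (hpb i) k
  -- Rows: the constant row `1` and the integer coordinates of the points `p i`.
  let A : Matrix (Option κ) ι ℤ := Matrix.of fun r i => r.elim 1 (c i)
  have hrow : ∀ y : ι → ℝ, A.map Int.cast *ᵥ y =
      fun r : Option κ => r.elim (∑ i, y i) fun k => b.repr (∑ i, y i • p i) k := by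
    intro y
    funext r
    cases r with
    | none => simp [A, Matrix.mulVec, dotProduct, Matrix.map_apply, Matrix.of_apply]
    | some k =>
      simp [A, Matrix.mulVec, dotProduct, Matrix.map_apply, Matrix.of_apply, map_sum, ← hc,
        mul_comm]
  refine Matrix.exists_int_mul_eq_intCast_of_mulVec_eq A ?_
    (fun r : Option κ => r.elim 1 fun _ => 0) ?_
  · intro y y' hyy'
    have hsub := Matrix.mulVec_sub (A.map Int.cast) y y'
    rw [hyy', sub_self, hrow] at hsub
    have hsum : ∑ i, (y - y') i = 0 := congrFun hsub none
    have hvec : ∑ i, (y - y') i • p i = 0 :=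
      b.ext_elem fun k => by simpa using congrFun hsub (some k)
    funext i
    exact sub_eq_zero.mp (affineIndependent_iff.mp hp Finset.univ _ hsum hvec i (Finset.mem_univ i))
  · rw [hrow, hw0, hw1]
    funext r
    cases r <;> simp

theorem exists_multiset_sum_eq_zero_of_zero_mem_convexHull {V κ : Type*} [AddCommGroup V]
    [Module ℝ V] [Finite κ] (b : Module.Basis κ ℝ V) {S : Set V}
    (hS : S ⊆ Submodule.span ℤ (Set.range b)) (h0 : (0 : V) ∈ convexHull ℝ S) :
    ∃ M : Multiset V, M ≠ 0 ∧ (∀ v ∈ M, v ∈ S) ∧ M.sum = 0 := by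
  classical
  obtain ⟨ι, _, p, w, hpS, hp, hw, hw1, hw0⟩ := eq_pos_convex_span_of_mem_convexHull h0
  obtain ⟨d, hd, hdw⟩ := exists_int_mul_eq_intCast_of_affineIndependent b hp
    (fun i => hS (hpS ⟨i, rfl⟩)) hw1 hw0
  choose z hz using hdw
  have hnat : ∀ i, ((z i).natAbs : ℝ) = |(d : ℝ)| * w i := by
    intro i
    rw [Nat.cast_natAbs, Int.cast_abs, ← hz, abs_mul, abs_of_pos (hw i)]
  obtain ⟨i₀⟩ : Nonempty ι := by
    by_contra h
    rw [not_nonempty_iff] at h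
    simp at hw1
  have hz₀ : (z i₀).natAbs ≠ 0 := by
    have hpos : (0 : ℝ) < |(d : ℝ)| * w i₀ := mul_pos (by simpa using hd) (hw i₀)
    rw [← hnat i₀] at hpos
    exact_mod_cast hpos.ne'
  set M := ∑ i, Multiset.replicate (z i).natAbs (p i)
  have hmem : p i₀ ∈ M :=
    Multiset.mem_sum.2 ⟨i₀, Finset.mem_univ _, Multiset.mem_replicate.2 ⟨hz₀, rfl⟩⟩
  refine ⟨M, fun h => by simp [h] at hmem, fun v hv => ?_, ?_⟩
  · obtain ⟨i, -, hi⟩ := Multiset.mem_sum.1 hv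
    rw [Multiset.eq_of_mem_replicate hi]
    exact hpS ⟨i, rfl⟩
  · rw [Multiset.sum_sum]
    simp only [Multiset.sum_replicate, ← Nat.cast_smul_eq_nsmul ℝ, hnat, mul_smul,
      ← Finset.smul_sum, hw0, smul_zero]

theorem Multiset.exists_mem_inner_pos_of_inner_sum_pos {V : Type*} [NormedAddCommGroup V]
    [InnerProductSpace ℝ V] {x : V} {Y : Multiset V} (h : 0 < ⟪x, Y.sum⟫) :
    ∃ y ∈ Y, 0 < ⟪x, y⟫ := by
  induction Y using Multiset.induction_on with
  | empty => simp at h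
  | cons y Y ih =>
    rw [Multiset.sum_cons, inner_add_right] at h
    by_cases hy : 0 < ⟪x, y⟫
    · exact ⟨y, Multiset.mem_cons_self y Y, hy⟩
    · obtain ⟨y', hy', h'⟩ := ih (by linarith)
      exact ⟨y', Multiset.mem_cons_of_mem hy', h'⟩

theorem exists_forall_inner_pos_of_zero_notMem_convexHull {V : Type*} [NormedAddCommGroup V]
    [InnerProductSpace ℝ V] [CompleteSpace V] {S : Set V} (hS : S.Finite)
    (h0 : (0 : V) ∉ convexHull ℝ S) : ∃ χ : V, ∀ v ∈ S, 0 < ⟪v, χ⟫ := by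
  obtain ⟨f, u, hf0, hfS⟩ := geometric_hahn_banach_point_closed (convex_convexHull ℝ S)
    (hS.isCompact_convexHull ℝ).isClosed h0
  refine ⟨(InnerProductSpace.toDual ℝ V).symm f, fun v hv => ?_⟩
  rw [real_inner_comm, InnerProductSpace.toDual_symm_apply]
  rw [map_zero] at hf0
  exact hf0.trans (hfS v (subset_convexHull ℝ S hv))

theorem exists_pos_between_of_finite {A B : Set ℝ} (hA : A.Finite) (hB : B.Finite)
    (hB0 : ∀ b ∈ B, 0 < b) (hAB : ∀ a ∈ A, ∀ b ∈ B, a < b) :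
    ∃ c, 0 < c ∧ (∀ a ∈ A, a < c) ∧ ∀ b ∈ B, c < b := by
  set m := sSup (insert 0 A)
  have hm_ge : ∀ a ∈ insert 0 A, a ≤ m := fun a ha => le_csSup (hA.insert 0).bddAbove ha
  have hm_lt : ∀ b ∈ B, m < b := by
    intro b hb
    have hm : m ∈ insert 0 A := (Set.insert_nonempty 0 A).csSup_mem (hA.insert 0)
    rcases hm with h | h
    · rw [h]; exact hB0 b hb
    · exact hAB _ h b hb
  set M := sInf (insert (m + 1) B)
  have hM_le : ∀ b ∈ insert (m + 1) B, M ≤ b := fun b hb => csInf_le (hB.insert _).bddBelow hb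
  have hmM : m < M := by
    have hM : M ∈ insert (m + 1) B := (Set.insert_nonempty _ B).csInf_mem (hB.insert _)
    rcases hM with h | h
    · rw [h]; linarith
    · exact hm_lt _ h
  have h0m : 0 ≤ m := hm_ge 0 (Set.mem_insert 0 A)
  refine ⟨(m + M) / 2, by linarith, fun a ha => ?_, fun b hb => ?_⟩
  · linarith [hm_ge a (Set.mem_insert_of_mem 0 ha)]
  · linarith [hM_le b (Set.mem_insert_of_mem _ hb)]

end LinearAlgebra

namespace RootSystemData

variable {V : Type} [NormedAddCommGroup V] [InnerProductSpace ℝ V] (R : RootSystemData V)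

/-! ### Roots, the basis of simple roots and heights -/

lemma ne_zero_of_mem_roots {β : V} (h : β ∈ R.roots) : β ≠ 0 :=
  fun e => R.zero_not_mem (e ▸ h)

lemma ne_zero_of_mem_pos {β : V} (h : β ∈ R.pos) : β ≠ 0 :=
  R.ne_zero_of_mem_roots (R.pos_subset h)

lemma neg_mem_roots {β : V} (h : β ∈ R.roots) : -β ∈ R.roots := by
  have hββ : ⟪β, β⟫ ≠ 0 := (real_inner_self_pos.mpr (R.ne_zero_of_mem_roots h)).ne'
  have h2 : 2 * ⟪β, β⟫ / ⟪β, β⟫ = 2 := by field_simp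
  have := R.reflect_mem β h β h
  rwa [h2, two_smul, sub_add_cancel_left] at this

/-- Strict Cauchy–Schwarz, since by reducedness distinct roots with `⟪x, y⟫ > 0` are not
proportional. -/
lemma inner_mul_inner_lt_of_inner_pos {x y : V} (hx : x ∈ R.roots) (hy : y ∈ R.roots)
    (hne : x ≠ y) (hxy : 0 < ⟪x, y⟫) : ⟪x, y⟫ * ⟪x, y⟫ < ⟪x, x⟫ * ⟪y, y⟫ := by
  have hlt : ⟪x, y⟫ < ‖x‖ * ‖y‖ := by
    refine (real_inner_le_norm x y).lt_of_ne fun heq => hne ?_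
    have hy0 : ‖y‖ ≠ 0 := norm_ne_zero_iff.mpr (R.ne_zero_of_mem_roots hy)
    have hxy' : x = (‖x‖ / ‖y‖) • y := by
      rw [div_eq_inv_mul, mul_smul, ← inner_eq_norm_mul_iff_real.mp heq, smul_smul,
        inv_mul_cancel₀ hy0, one_smul]
    rcases R.reduced y hy _ (hxy' ▸ hx) with h | h
    · rw [hxy', h, one_smul]
    · have : 0 ≤ ‖x‖ / ‖y‖ := by positivity
      linarith
  rw [real_inner_self_eq_norm_mul_norm, real_inner_self_eq_norm_mul_norm]
  nlinarith [hxy.le]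

lemma sub_mem_roots_of_inner_pos {x y : V} (hx : x ∈ R.roots) (hy : y ∈ R.roots) (hne : x ≠ y)
    (hxy : 0 < ⟪x, y⟫) : x - y ∈ R.roots := by
  obtain ⟨n, hn⟩ := R.crystallographic x hx y hy
  obtain ⟨p, hp⟩ := R.crystallographic y hy x hx
  rw [real_inner_comm] at hp
  have hxx : 0 < ⟪x, x⟫ := real_inner_self_pos.mpr (R.ne_zero_of_mem_roots hx)
  have hyy : 0 < ⟪y, y⟫ := real_inner_self_pos.mpr (R.ne_zero_of_mem_roots hy)
  have hcs := R.inner_mul_inner_lt_of_inner_pos hx hy hne hxy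
  -- The crystallographic integers satisfy `n * p * ⟪x, x⟫ * ⟪y, y⟫ = 4 * ⟪x, y⟫ ^ 2`, so
  -- `0 < n`, `0 < p` and `n * p < 4`; hence `n = 1` or `p = 1`.
  have hn0 : 0 < n := by
    have : (0 : ℝ) < n := by nlinarith
    exact_mod_cast this
  have hp0 : 0 < p := by
    have : (0 : ℝ) < p := by nlinarith
    exact_mod_cast this
  have hnp4 : n * p < 4 := by
    have : ((n * p : ℤ) : ℝ) < 4 := by
      push_cast
      nlinarith [mul_pos hxx hyy]
    exact_mod_cast this
  have hnp : n = 1 ∨ p = 1 := by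
    by_contra! h
    nlinarith [(by omega : 2 ≤ n), (by omega : 2 ≤ p)]
  rcases hnp with rfl | rfl
  · have hc : 2 * ⟪x, y⟫ / ⟪y, y⟫ = 1 := by rw [hn]; field_simp; simp
    have := R.reflect_mem y hy x hx
    rwa [hc, one_smul] at this
  · have hc : 2 * ⟪y, x⟫ / ⟪x, x⟫ = 1 := by rw [real_inner_comm, hp]; field_simp; simp
    have := R.neg_mem_roots (R.reflect_mem x hx y hy)
    rwa [hc, one_smul, neg_sub] at this

lemma eq_or_sub_mem_pos_or_sub_mem_pos {x y : V} (hx : x ∈ R.pos) (hy : y ∈ R.pos)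
    (hxy : 0 < ⟪x, y⟫) : x = y ∨ x - y ∈ R.pos ∨ y - x ∈ R.pos := by
  by_cases hne : x = y
  · exact Or.inl hne
  rcases R.mem_pos_or_neg_mem_pos _
    (R.sub_mem_roots_of_inner_pos (R.pos_subset hx) (R.pos_subset hy) hne hxy) with h | h
  · exact Or.inr (Or.inl h)
  · exact Or.inr (Or.inr (by simpa using h))

lemma mem_span_nat_simples {β : V} (hβ : β ∈ R.pos) :
    β ∈ Submodule.span ℕ (R.simples : Set V) := by
  obtain ⟨c, hc, rfl⟩ := R.pos_sum_of_simples β hβ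
  refine Submodule.finsuppSum_mem _ _ _ _ fun α hα => ?_
  rw [Nat.cast_smul_eq_nsmul]
  exact Submodule.smul_mem _ _ (Submodule.subset_span (hc (Finsupp.mem_support_iff.2 hα)))

lemma span_simples_eq_top : Submodule.span ℝ (R.simples : Set V) = ⊤ := by
  refine eq_top_iff.mpr (R.span_roots ▸ Submodule.span_le.mpr fun β hβ => ?_)
  have hpos : ∀ {γ}, γ ∈ R.pos → γ ∈ Submodule.span ℝ (R.simples : Set V) := fun hγ =>
    Submodule.span_le_restrictScalars ℕ ℝ _ (R.mem_span_nat_simples hγ)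
  rcases R.mem_pos_or_neg_mem_pos β hβ with h | h
  · exact hpos h
  · simpa using Submodule.neg_mem _ (hpos h)

noncomputable def simpleBasis : Module.Basis R.simples ℝ V :=
  Module.Basis.mk R.simples_linearIndependent
    (by rw [Subtype.range_coe_subtype, Finset.setOfPred_mem, R.span_simples_eq_top])

lemma range_simpleBasis : Set.range R.simpleBasis = R.simples := by
  rw [simpleBasis, Module.Basis.coe_mk, Subtype.range_coe_subtype, Finset.setOfPred_mem]

lemma pos_mem_span_int_simpleBasis {β : V} (hβ : β ∈ R.pos) :
    β ∈ Submodule.span ℤ (Set.range R.simpleBasis) := by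
  rw [range_simpleBasis]
  exact Submodule.span_le_restrictScalars ℕ ℤ _ (R.mem_span_nat_simples hβ)

noncomputable def heightFun : V →ₗ[ℝ] ℝ := R.simpleBasis.sumCoords

lemma heightFun_simple {α : V} (hα : α ∈ R.simples) : R.heightFun α = 1 := by
  have : R.simpleBasis ⟨α, hα⟩ = α := Module.Basis.mk_apply _ _ _
  rw [← this, heightFun, Module.Basis.sumCoords_self_apply]

lemma heightFun_simples_pos : ∀ α ∈ R.simples, 0 < R.heightFun α :=
  fun _ hα => (R.heightFun_simple hα).symm ▸ one_pos

lemma map_pos_of_mem_pos {φ : V →ₗ[ℝ] ℝ} (hφ : ∀ α ∈ R.simples, 0 < φ α) {β : V}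
    (hβ : β ∈ R.pos) : 0 < φ β := by
  obtain ⟨c, hc, rfl⟩ := R.pos_sum_of_simples β hβ
  have hc0 : c.support.Nonempty := by
    rw [Finset.nonempty_iff_ne_empty, Ne, Finsupp.support_eq_empty]
    rintro rfl
    exact R.ne_zero_of_mem_pos hβ (by simp)
  rw [map_finsuppSum]
  refine Finset.sum_pos (fun α hα => ?_) hc0
  dsimp only
  rw [map_smul, smul_eq_mul]
  exact mul_pos (by exact_mod_cast Nat.pos_of_ne_zero (Finsupp.mem_support_iff.mp hα))
    (hφ α (hc hα))

lemma map_sum_pos {φ : V →ₗ[ℝ] ℝ} (hφ : ∀ α ∈ R.simples, 0 < φ α) {m : Multiset V}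
    (hm : m ≠ 0) (hpos : ∀ x ∈ m, x ∈ R.pos) : 0 < φ m.sum := by
  rw [map_multiset_sum]
  simpa using Multiset.sum_lt_sum_of_nonempty (f := fun _ => (0 : ℝ)) hm
    fun x hx => R.map_pos_of_mem_pos hφ (hpos x hx)

lemma inner_pos_of_mem_pos {χ : V} (hχ : ∀ α ∈ R.simples, 0 < ⟪α, χ⟫) {β : V}
    (hβ : β ∈ R.pos) : 0 < ⟪β, χ⟫ := by
  simpa [real_inner_comm] using R.map_pos_of_mem_pos (φ := (innerSL ℝ χ).toLinearMap)
    (by simpa [real_inner_comm] using hχ) hβ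

lemma heightFun_sum_pos {m : Multiset V} (hm : m ≠ 0) (hpos : ∀ x ∈ m, x ∈ R.pos) :
    0 < R.heightFun m.sum :=
  R.map_sum_pos R.heightFun_simples_pos hm hpos

lemma heightFun_eq_height {β : V} (hβ : β ∈ R.pos) : R.heightFun β = R.height β := by
  have hex := R.pos_sum_of_simples β hβ
  obtain ⟨hc, hβc⟩ := Classical.choose_spec hex
  rw [height, dif_pos hex, Nat.cast_finsupp_sum]
  conv_lhs => rw [hβc]
  rw [map_finsuppSum]
  refine Finsupp.sum_congr fun α hα => ?_
  rw [map_smul, smul_eq_mul, R.heightFun_simple (hc hα), mul_one]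

lemma height_pos {β : V} (hβ : β ∈ R.pos) : 0 < R.height β := by
  have := R.heightFun_eq_height hβ ▸ R.map_pos_of_mem_pos R.heightFun_simples_pos hβ
  exact_mod_cast this

lemma height_add {x y : V} (hx : x ∈ R.pos) (hy : y ∈ R.pos) (hxy : x + y ∈ R.pos) :
    R.height (x + y) = R.height x + R.height y := by
  have := map_add R.heightFun x y
  rw [R.heightFun_eq_height hx, R.heightFun_eq_height hy, R.heightFun_eq_height hxy] at this
  exact_mod_cast this

section Order

variable {R}

lemma Gt.trans {x y z : V} (h₁ : R.Gt x y) (h₂ : R.Gt y z) : R.Gt x z := by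
  obtain ⟨m₁, hm₁, hpos₁, h₁⟩ := h₁
  obtain ⟨m₂, hm₂, hpos₂, h₂⟩ := h₂
  refine ⟨m₁ + m₂, by simp [hm₁], fun v hv => ?_, ?_⟩
  · rcases Multiset.mem_add.1 hv with hv | hv
    exacts [hpos₁ v hv, hpos₂ v hv]
  · rw [Multiset.sum_add, ← h₁, ← h₂, sub_add_sub_cancel]

lemma Gt.ge {x y : V} (h : R.Gt x y) : R.Ge x y := Or.inl h

lemma Ge.trans {x y z : V} (h₁ : R.Ge x y) (h₂ : R.Ge y z) : R.Ge x z := by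
  rcases h₁ with h₁ | rfl
  · rcases h₂ with h₂ | rfl
    exacts [(h₁.trans h₂).ge, h₁.ge]
  · exact h₂

lemma Gt.trans_ge {x y z : V} (h₁ : R.Gt x y) (h₂ : R.Ge y z) : R.Gt x z := by
  rcases h₂ with h₂ | rfl
  exacts [h₁.trans h₂, h₁]

lemma Ge.trans_gt {x y z : V} (h₁ : R.Ge x y) (h₂ : R.Gt y z) : R.Gt x z := by
  rcases h₁ with h₁ | rfl
  exacts [h₁.trans h₂, h₂]

lemma gt_of_sub_mem_pos {x y : V} (h : x - y ∈ R.pos) : R.Gt x y :=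
  ⟨{x - y}, Multiset.singleton_ne_zero _, by simpa using h, by simp⟩

lemma Gt.map_lt {φ : V →ₗ[ℝ] ℝ} (hφ : ∀ α ∈ R.simples, 0 < φ α) {x y : V} (h : R.Gt x y) :
    φ y < φ x := by
  obtain ⟨m, hm, hpos, hxy⟩ := h
  have := R.map_sum_pos hφ hm hpos
  rw [← hxy, map_sub] at this
  linarith

lemma Gt.heightFun_lt {x y : V} (h : R.Gt x y) : R.heightFun y < R.heightFun x :=
  h.map_lt R.heightFun_simples_pos

lemma Gt.inner_lt {χ : V} (hχ : ∀ α ∈ R.simples, 0 < ⟪α, χ⟫) {x y : V} (h : R.Gt x y) :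
    ⟪y, χ⟫ < ⟪x, χ⟫ := by
  simpa [real_inner_comm] using h.map_lt (φ := (innerSL ℝ χ).toLinearMap)
    (by simpa [real_inner_comm] using hχ)

lemma Gt.ne {x y : V} (h : R.Gt x y) : x ≠ y := by
  rintro rfl
  exact lt_irrefl _ h.heightFun_lt

end Order

/-! ### The exchange argument -/

def IsRootLowerSet (L : Set V) : Prop :=
  L ⊆ R.pos ∧ ∀ γ ∈ L, ∀ β ∈ R.pos, R.Gt γ β → β ∈ L

lemma exists_inner_pos_of_sum_eq_sum {X Y : Multiset V} (hX : X ≠ 0) (hpos : ∀ x ∈ X, x ∈ R.pos)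
    (h : X.sum = Y.sum) : ∃ x ∈ X, ∃ y ∈ Y, 0 < ⟪x, y⟫ := by
  have hY : Y.sum ≠ 0 := fun h0 => (R.heightFun_sum_pos hX hpos).ne' (by rw [h, h0, map_zero])
  obtain ⟨x, hx, hxY⟩ := Multiset.exists_mem_inner_pos_of_inner_sum_pos (x := Y.sum) (Y := X)
    (by rw [h]; exact real_inner_self_pos.mpr hY)
  rw [real_inner_comm] at hxY
  obtain ⟨y, hy, hxy⟩ := Multiset.exists_mem_inner_pos_of_inner_sum_pos hxY
  exact ⟨x, hx, y, hy, hxy⟩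

def IsBalanced (L : Set V) (X Y N : Multiset V) : Prop :=
  (∀ x ∈ X, x ∈ R.pos ∧ x ∉ L) ∧ (∀ y ∈ Y, y ∈ L) ∧ (∀ z ∈ N, z ∈ R.pos) ∧
    X.sum + N.sum = Y.sum

namespace IsBalanced

variable {R} {L : Set V} {X Y N : Multiset V}

lemma exchange_left [DecidableEq V] (h : R.IsBalanced L X Y N) {z γ : V} (hz : z ∈ X) (hγ : γ ∈ Y)
    (hzγ : z - γ ∈ R.pos) : R.IsBalanced L (X.erase z) (Y.erase γ) ((z - γ) ::ₘ N) := by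
  refine ⟨fun x hx => h.1 x (Multiset.mem_of_mem_erase hx),
    fun y hy => h.2.1 y (Multiset.mem_of_mem_erase hy),
    Multiset.forall_mem_cons.2 ⟨hzγ, h.2.2.1⟩, ?_⟩
  rw [Multiset.sum_cons]
  linear_combination (norm := module) h.2.2.2 + Multiset.sum_erase hz - Multiset.sum_erase hγ

lemma cancel [DecidableEq V] (h : R.IsBalanced L X Y N) {z : V} (hzN : z ∈ N) (hzY : z ∈ Y) :
    R.IsBalanced L X (Y.erase z) (N.erase z) := by
  refine ⟨h.1, fun y hy => h.2.1 y (Multiset.mem_of_mem_erase hy),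
    fun y hy => h.2.2.1 y (Multiset.mem_of_mem_erase hy), ?_⟩
  linear_combination (norm := module) h.2.2.2 + Multiset.sum_erase hzN - Multiset.sum_erase hzY

lemma exchange_mid [DecidableEq V] (h : R.IsBalanced L X Y N) {z γ : V} (hz : z ∈ N) (hγ : γ ∈ Y)
    (hzγ : z - γ ∈ R.pos) : R.IsBalanced L X (Y.erase γ) ((z - γ) ::ₘ N.erase z) := by
  refine ⟨h.1, fun y hy => h.2.1 y (Multiset.mem_of_mem_erase hy),
    Multiset.forall_mem_cons.2 ⟨hzγ, fun y hy => h.2.2.1 y (Multiset.mem_of_mem_erase hy)⟩, ?_⟩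
  rw [Multiset.sum_cons]
  linear_combination (norm := module) h.2.2.2 + Multiset.sum_erase hz - Multiset.sum_erase hγ

lemma exchange_right [DecidableEq V] (hL : R.IsRootLowerSet L) (h : R.IsBalanced L X Y N)
    {z γ : V} (hz : z ∈ N) (hγ : γ ∈ Y) (hγz : γ - z ∈ R.pos) :
    R.IsBalanced L X ((γ - z) ::ₘ Y.erase γ) (N.erase z) := by
  have hγz_L : γ - z ∈ L :=
    hL.2 γ (h.2.1 γ hγ) _ hγz (gt_of_sub_mem_pos (by simpa using h.2.2.1 z hz))
  refine ⟨h.1,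
    Multiset.forall_mem_cons.2 ⟨hγz_L, fun y hy => h.2.1 y (Multiset.mem_of_mem_erase hy)⟩,
    fun y hy => h.2.2.1 y (Multiset.mem_of_mem_erase hy), ?_⟩
  rw [Multiset.sum_cons]
  linear_combination (norm := module) h.2.2.2 + Multiset.sum_erase hz - Multiset.sum_erase hγ

/-- One exchange step: cancel some `z ∈ X + N` against some `γ ∈ Y` with `⟪z, γ⟫ > 0`, keeping
the remainder `z - γ` or `γ - z`, which is a positive root. -/
lemma exists_exchange (hL : R.IsRootLowerSet L) (h : R.IsBalanced L X Y N) (hX : X ≠ 0) :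
    ∃ X' Y' N', R.IsBalanced L X' Y' N' ∧ X' + N' ≠ 0 ∧
      (Y'.map R.height).sum < (Y.map R.height).sum ∧
      Multiset.card X + Multiset.card Y' ≤ Multiset.card X' + Multiset.card Y := by
  classical
  obtain ⟨z, hz, γ, hγ, hzγ⟩ := R.exists_inner_pos_of_sum_eq_sum (Y := Y) (by simp [hX])
    (fun z hz => (Multiset.mem_add.1 hz).elim (fun h' => (h.1 z h').1) (h.2.2.1 z))
    (by rw [Multiset.sum_add, h.2.2.2])
  have hγL := h.2.1 γ hγ
  have hγ_pos := hL.1 hγL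
  have hY_card := Multiset.card_erase_add_one hγ
  have hY_ht := Multiset.sum_map_erase (f := R.height) hγ
  have hγ_ht := R.height_pos hγ_pos
  rcases Multiset.mem_add.1 hz with hzX | hzN
  · -- `z ∉ L` rules out `z = γ` and `z < γ`.
    obtain ⟨hz_pos, hzL⟩ := h.1 z hzX
    rcases R.eq_or_sub_mem_pos_or_sub_mem_pos hz_pos hγ_pos hzγ with rfl | hd | hd
    · exact absurd hγL hzL
    · have := Multiset.card_erase_add_one hzX
      exact ⟨_, _, _, h.exchange_left hzX hγ hd, by simp, by omega, by omega⟩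
    · exact absurd (hL.2 γ hγL z hz_pos (gt_of_sub_mem_pos hd)) hzL
  · have hz_pos := h.2.2.1 z hzN
    rcases R.eq_or_sub_mem_pos_or_sub_mem_pos hz_pos hγ_pos hzγ with rfl | hd | hd
    · exact ⟨_, _, _, h.cancel hzN hγ, by simp [hX], by omega, by omega⟩
    · exact ⟨_, _, _, h.exchange_mid hzN hγ hd, by simp, by omega, by omega⟩
    · have hγz_ht := R.height_add hd hz_pos (by rwa [sub_add_cancel])
      rw [sub_add_cancel] at hγz_ht
      have := R.height_pos hz_pos
      refine ⟨_, _, _, h.exchange_right hL hzN hγ hd, by simp [hX], ?_, ?_⟩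
      · simp only [Multiset.map_cons, Multiset.sum_cons]
        omega
      · simp only [Multiset.card_cons]
        omega

/-- Exchange steps do not decrease `|Y| - |X|` and lower the height of `Y`, so they stop, which
they can only do at `X = 0`; there `Y ≠ 0` as `ΣY = ΣN ≠ 0`. -/
theorem card_lt_card (hL : R.IsRootLowerSet L) (h : R.IsBalanced L X Y N) (hXN : X + N ≠ 0) :
    Multiset.card X < Multiset.card Y := by
  induction hn : (Y.map R.height).sum using Nat.strong_induction_on generalizing X Y N with
  | _ n ih =>
  rcases eq_or_ne X 0 with rfl | hX
  · have hN : N ≠ 0 := by simpa using hXN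
    refine Multiset.card_pos.2 fun hY => (R.heightFun_sum_pos hN h.2.2.1).ne' ?_
    rw [← zero_add N.sum, ← Multiset.sum_zero, h.2.2.2, hY, Multiset.sum_zero, map_zero]
  · obtain ⟨X', Y', N', h', hXN', hlt, hcard⟩ := h.exists_exchange hL hX
    have := ih _ (hn ▸ hlt) h' hXN' rfl
    omega

end IsBalanced

/-! ### Regions and lower sets -/

def regionOf (L : Set V) : Set V :=
  {χ | (∀ α ∈ R.simples, 0 < ⟪α, χ⟫) ∧ (∀ γ ∈ L, ⟪γ, χ⟫ < 1) ∧
    ∀ β ∈ R.pos, β ∉ L → 1 < ⟪β, χ⟫}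

/-- A vector pairing positively with all of `separatingSet L` has a positive multiple in
`regionOf L`. -/
def separatingSet (L : Set V) : Set V :=
  R.simples ∪ Set.image2 (· - ·) ((R.pos : Set V) \ L) L

lemma separatingSet_finite {L : Set V} (hL : L ⊆ R.pos) : (R.separatingSet L).Finite :=
  R.simples.finite_toSet.union
    ((R.pos.finite_toSet.sdiff).image2 _ (R.pos.finite_toSet.subset hL))

lemma separatingSet_subset_span {L : Set V} (hL : L ⊆ R.pos) :
    R.separatingSet L ⊆ Submodule.span ℤ (Set.range R.simpleBasis) := by
  rintro v (hv | ⟨β, hβ, γ, hγ, rfl⟩)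
  · exact R.pos_mem_span_int_simpleBasis (R.simples_subset hv)
  · exact Submodule.sub_mem _ (R.pos_mem_span_int_simpleBasis hβ.1)
      (R.pos_mem_span_int_simpleBasis (hL hγ))

lemma zero_notMem_convexHull_separatingSet {L : Set V} (hL : R.IsRootLowerSet L) :
    (0 : V) ∉ convexHull ℝ (R.separatingSet L) := by
  classical
  intro h0
  obtain ⟨M, hM0, hMS, hMsum⟩ := exists_multiset_sum_eq_zero_of_zero_mem_convexHull
    R.simpleBasis (R.separatingSet_subset_span hL.1) h0
  set N := M.filter (· ∈ R.simples)
  set D := M.filter (· ∉ R.simples)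
  have hD : ∀ v ∈ D, ∃ β ∈ (R.pos : Set V) \ L, ∃ γ ∈ L, β - γ = v := by
    intro v hv
    obtain ⟨hvM, hvs⟩ := Multiset.mem_filter.1 hv
    exact (hMS v hvM).resolve_left hvs
  choose! β hβ γ hγ hβγ using hD
  have hsum : (D.map β).sum + N.sum = (D.map γ).sum := by
    have hD_sum : (D.map β).sum - (D.map γ).sum = D.sum := by
      rw [← Multiset.sum_map_sub, Multiset.map_congr rfl hβγ, Multiset.map_id']
    have hM : N.sum + D.sum = 0 := by rw [← Multiset.sum_add, Multiset.filter_add_not, hMsum]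
    linear_combination (norm := module) hD_sum + hM
  by_cases hXN : D.map β + N = 0
  · obtain ⟨hD0, hN0⟩ := add_eq_zero.1 hXN
    rw [Multiset.map_eq_zero] at hD0
    exact hM0 (by rw [← Multiset.filter_add_not (· ∈ R.simples) M]; simp [N, D, hN0, hD0])
  · have := IsBalanced.card_lt_card hL ⟨by simpa using fun v hv => hβ v hv,
      by simpa using fun v hv => hγ v hv,
      fun α hα => R.simples_subset (Multiset.mem_filter.1 hα).2, hsum⟩ hXN
    simp at this

theorem regionOf_nonempty {L : Set V} (hL : R.IsRootLowerSet L) : (R.regionOf L).Nonempty := by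
  have := R.simpleBasis.finiteDimensional_of_finite
  obtain ⟨χ, hχ⟩ := exists_forall_inner_pos_of_zero_notMem_convexHull
    (R.separatingSet_finite hL.1) (R.zero_notMem_convexHull_separatingSet hL)
  have hdom : ∀ α ∈ R.simples, 0 < ⟪α, χ⟫ := fun α hα => hχ α (Or.inl hα)
  obtain ⟨c, hc0, hcL, hcU⟩ := exists_pos_between_of_finite
    ((R.pos.finite_toSet.subset hL.1).image fun γ => ⟪γ, χ⟫)
    (R.pos.finite_toSet.sdiff.image fun β => ⟪β, χ⟫)
    (by rintro _ ⟨β, hβ, rfl⟩; exact R.inner_pos_of_mem_pos hdom hβ.1)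
    (by
      rintro _ ⟨γ, hγ, rfl⟩ _ ⟨β, hβ, rfl⟩
      have := hχ _ (Or.inr (Set.mem_image2_of_mem hβ hγ))
      rw [inner_sub_left] at this
      linarith)
  refine ⟨c⁻¹ • χ, fun α hα => ?_, fun γ hγ => ?_, fun β hβ hβL => ?_⟩
  · rw [real_inner_smul_right]
    exact mul_pos (inv_pos.2 hc0) (hdom α hα)
  · rw [real_inner_smul_right, inv_mul_lt_iff₀ hc0, mul_one]
    exact hcL _ ⟨γ, hγ, rfl⟩
  · rw [real_inner_smul_right, lt_inv_mul_iff₀ hc0, mul_one]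
    exact hcU _ ⟨β, ⟨hβ, hβL⟩, rfl⟩

lemma convex_regionOf (L : Set V) : Convex ℝ (R.regionOf L) := by
  intro x hx y hy a b ha hb hab
  simp only [regionOf, Set.mem_ofPred_eq, inner_add_right, real_inner_smul_right] at hx hy ⊢
  exact ⟨fun α hα => convex_Ioi (0 : ℝ) (hx.1 α hα) (hy.1 α hα) ha hb hab,
    fun γ hγ => convex_Iio (1 : ℝ) (hx.2.1 γ hγ) (hy.2.1 γ hγ) ha hb hab,
    fun β hβ hβL => convex_Ioi (1 : ℝ) (hx.2.2 β hβ hβL) (hy.2.2 β hβ hβL) ha hb hab⟩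

lemma regionOf_subset_chamberSet (L : Set V) : R.regionOf L ⊆ R.chamberSet := by
  intro χ hχ
  refine ⟨hχ.1, fun β hβ => ?_⟩
  by_cases hβL : β ∈ L
  exacts [(hχ.2.1 β hβL).ne, (hχ.2.2 β hβ hβL).ne']

lemma setOf_inner_lt_one_eq {L : Set V} (hL : L ⊆ R.pos) {χ : V} (hχ : χ ∈ R.regionOf L) :
    {β | β ∈ R.pos ∧ ⟪β, χ⟫ < 1} = L := by
  ext β
  refine ⟨fun ⟨hβ, hβχ⟩ => ?_, fun hβ => ⟨hL hβ, hχ.2.1 β hβ⟩⟩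
  by_contra hβL
  exact hβχ.not_gt (hχ.2.2 β hβ hβL)

lemma isRootLowerSet_ltOne {F : Set V} (hF : F ⊆ R.chamberSet) : R.IsRootLowerSet (R.ltOne F) :=
  ⟨fun _ hβ => hβ.1, fun _ hγ _ hβ hgt =>
    ⟨hβ, fun χ hχ => ((hgt.inner_lt (hF hχ).1).trans (hγ.2 χ hχ))⟩⟩

namespace IsRegion

variable {R} {F : Set V}

lemma subset_chamberSet (hF : R.IsRegion F) : F ⊆ R.chamberSet := by
  obtain ⟨χ, -, rfl⟩ := hF
  exact connectedComponentIn_subset _ _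

lemma nonempty (hF : R.IsRegion F) : F.Nonempty := by
  obtain ⟨χ, hχ, rfl⟩ := hF
  exact ⟨χ, mem_connectedComponentIn hχ⟩

/-- By the intermediate value theorem, as `⟪β, ·⟫ ≠ 1` on the connected set `F`. -/
lemma mem_ltOne_or_mem_gtOne (hF : R.IsRegion F) {β : V} (hβ : β ∈ R.pos) :
    β ∈ R.ltOne F ∨ β ∈ R.gtOne F := by
  by_contra! h
  simp only [ltOne, gtOne, Set.mem_ofPred_eq, hβ, true_and, not_forall, not_lt] at h
  obtain ⟨⟨χ₁, hχ₁, h₁⟩, χ₂, hχ₂, h₂⟩ := h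
  have hpre : IsPreconnected F := by
    obtain ⟨χ, -, rfl⟩ := hF
    exact isPreconnected_connectedComponentIn
  obtain ⟨χ, hχ, hχ1⟩ := hpre.intermediate_value hχ₂ hχ₁
    (continuous_const.inner continuous_id).continuousOn ⟨h₂, h₁⟩
  exact (hF.subset_chamberSet hχ).2 β hβ hχ1

lemma ltOne_eq (hF : R.IsRegion F) {χ : V} (hχ : χ ∈ F) :
    R.ltOne F = {β | β ∈ R.pos ∧ ⟪β, χ⟫ < 1} := by
  ext β
  refine ⟨fun hβ => ⟨hβ.1, hβ.2 χ hχ⟩, fun ⟨hβ, hβχ⟩ => ?_⟩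
  exact (hF.mem_ltOne_or_mem_gtOne hβ).resolve_right fun h => (h.2 χ hχ).not_gt hβχ

lemma gtOne_eq (hF : R.IsRegion F) : R.gtOne F = (R.pos : Set V) \ R.ltOne F := by
  obtain ⟨χ, hχ⟩ := hF.nonempty
  ext β
  exact ⟨fun hβ => ⟨hβ.1, fun h => (h.2 χ hχ).not_gt (hβ.2 χ hχ)⟩,
    fun ⟨hβ, hβL⟩ => (hF.mem_ltOne_or_mem_gtOne hβ).resolve_left hβL⟩

lemma regionOf_ltOne (hF : R.IsRegion F) : R.regionOf (R.ltOne F) = F := by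
  have hsub : F ⊆ R.regionOf (R.ltOne F) := fun χ hχ =>
    ⟨(hF.subset_chamberSet hχ).1, fun γ hγ => hγ.2 χ hχ,
      fun β hβ hβL => ((hF.mem_ltOne_or_mem_gtOne hβ).resolve_left hβL).2 χ hχ⟩
  refine subset_antisymm ?_ hsub
  obtain ⟨χ, hχC, hFχ⟩ := hF
  rw [hFχ] at hsub ⊢
  exact (R.convex_regionOf _).isPreconnected.subset_connectedComponentIn
    (hsub (mem_connectedComponentIn hχC)) (R.regionOf_subset_chamberSet _)

end IsRegion

theorem isRegion_regionOf {L : Set V} (hL : R.IsRootLowerSet L) : R.IsRegion (R.regionOf L) := by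
  obtain ⟨χ, hχ⟩ := R.regionOf_nonempty hL
  have hχC := R.regionOf_subset_chamberSet L hχ
  have hF : R.IsRegion (connectedComponentIn R.chamberSet χ) := ⟨χ, hχC, rfl⟩
  have hLF : R.ltOne (connectedComponentIn R.chamberSet χ) = L :=
    (hF.ltOne_eq (mem_connectedComponentIn hχC)).trans (R.setOf_inner_lt_one_eq hL.1 hχ)
  exact ⟨χ, hχC, hLF ▸ hF.regionOf_ltOne⟩

lemma ltOne_regionOf {L : Set V} (hL : R.IsRootLowerSet L) : R.ltOne (R.regionOf L) = L := by
  obtain ⟨χ, hχ⟩ := R.regionOf_nonempty hL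
  exact ((R.isRegion_regionOf hL).ltOne_eq hχ).trans (R.setOf_inner_lt_one_eq hL.1 hχ)

theorem bijOn_ltOne : Set.BijOn R.ltOne {F | R.IsRegion F} {L | R.IsRootLowerSet L} :=
  Set.InvOn.bijOn
    ⟨fun _ hF => IsRegion.regionOf_ltOne hF,
      fun _ hL => R.ltOne_regionOf hL⟩
    (fun _ hF => R.isRootLowerSet_ltOne (IsRegion.subset_chamberSet hF))
    (fun _ hL => R.isRegion_regionOf hL)

/-! ### Lower sets, upper sets and antichains -/

def IsRootUpperSet (U : Set V) : Prop :=
  U ⊆ R.pos ∧ ∀ γ ∈ U, ∀ β ∈ R.pos, R.Gt β γ → β ∈ U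

def maximals (S : Set V) : Set V := {β | β ∈ S ∧ ∀ β' ∈ S, ¬ R.Gt β' β}

def minimals (S : Set V) : Set V := {β | β ∈ S ∧ ∀ β' ∈ S, ¬ R.Gt β β'}

def downClosure (A : Set V) : Set V := {β | β ∈ R.pos ∧ ∃ a ∈ A, R.Ge a β}

def upClosure (A : Set V) : Set V := {β | β ∈ R.pos ∧ ∃ a ∈ A, R.Ge β a}

lemma isRootAntichain_maximals {S : Set V} (hS : S ⊆ R.pos) :
    R.IsRootAntichain (R.maximals S) :=
  ⟨fun _ hβ => hS hβ.1, fun x hx y hy hxy =>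
    ⟨fun h => h.elim (hy.2 x hx.1) hxy, fun h => h.elim (hx.2 y hy.1) (Ne.symm hxy)⟩⟩

lemma isRootAntichain_minimals {S : Set V} (hS : S ⊆ R.pos) :
    R.IsRootAntichain (R.minimals S) :=
  ⟨fun _ hβ => hS hβ.1, fun x hx y hy hxy =>
    ⟨fun h => h.elim (hx.2 y hy.1) hxy, fun h => h.elim (hy.2 x hx.1) (Ne.symm hxy)⟩⟩

lemma maximals_downClosure {A : Set V} (hA : R.IsRootAntichain A) :
    R.maximals (R.downClosure A) = A := by
  ext β
  constructor
  · rintro ⟨⟨-, a, ha, hgt | rfl⟩, hmax⟩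
    · exact absurd hgt (hmax a ⟨hA.1 ha, a, ha, Or.inr rfl⟩)
    · exact ha
  · refine fun hβ => ⟨⟨hA.1 hβ, β, hβ, Or.inr rfl⟩, ?_⟩
    rintro β' ⟨-, a, ha, hge⟩ hgt
    have hgt' := hge.trans_gt hgt
    exact (hA.2 a ha β hβ hgt'.ne).1 (Or.inl hgt')

lemma minimals_upClosure {A : Set V} (hA : R.IsRootAntichain A) :
    R.minimals (R.upClosure A) = A := by
  ext β
  constructor
  · rintro ⟨⟨-, a, ha, hgt | rfl⟩, hmin⟩
    · exact absurd hgt (hmin a ⟨hA.1 ha, a, ha, Or.inr rfl⟩)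
    · exact ha
  · refine fun hβ => ⟨⟨hA.1 hβ, β, hβ, Or.inr rfl⟩, ?_⟩
    rintro β' ⟨-, a, ha, hge⟩ hgt
    have hgt' := hgt.trans_ge hge
    exact (hA.2 β hβ a ha hgt'.ne).1 (Or.inl hgt')

lemma exists_mem_maximals_ge {S : Set V} (hS : S ⊆ R.pos) {β : V} (hβ : β ∈ S) :
    ∃ a ∈ R.maximals S, R.Ge a β := by
  obtain ⟨a, ⟨haS, haβ⟩, hmax⟩ := Set.Finite.exists_maximalFor R.heightFun
    {y | y ∈ S ∧ R.Ge y β} (R.pos.finite_toSet.subset fun y hy => hS hy.1) ⟨β, hβ, Or.inr rfl⟩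
  refine ⟨a, ⟨haS, fun β' hβ' hgt => ?_⟩, haβ⟩
  exact hgt.heightFun_lt.not_ge (hmax ⟨hβ', hgt.ge.trans haβ⟩ hgt.heightFun_lt.le)

lemma exists_mem_minimals_le {S : Set V} (hS : S ⊆ R.pos) {β : V} (hβ : β ∈ S) :
    ∃ a ∈ R.minimals S, R.Ge β a := by
  obtain ⟨a, ⟨haS, haβ⟩, hmin⟩ := Set.Finite.exists_minimalFor R.heightFun
    {y | y ∈ S ∧ R.Ge β y} (R.pos.finite_toSet.subset fun y hy => hS hy.1) ⟨β, hβ, Or.inr rfl⟩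
  refine ⟨a, ⟨haS, fun β' hβ' hgt => ?_⟩, haβ⟩
  exact hgt.heightFun_lt.not_ge (hmin ⟨hβ', haβ.trans hgt.ge⟩ hgt.heightFun_lt.le)

lemma downClosure_maximals {L : Set V} (hL : R.IsRootLowerSet L) :
    R.downClosure (R.maximals L) = L := by
  ext β
  constructor
  · rintro ⟨hβ, a, ha, hgt | rfl⟩
    exacts [hL.2 a ha.1 β hβ hgt, ha.1]
  · intro hβ
    obtain ⟨a, ha, hge⟩ := R.exists_mem_maximals_ge hL.1 hβ
    exact ⟨hL.1 hβ, a, ha, hge⟩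

lemma upClosure_minimals {U : Set V} (hU : R.IsRootUpperSet U) :
    R.upClosure (R.minimals U) = U := by
  ext β
  constructor
  · rintro ⟨hβ, a, ha, hgt | rfl⟩
    exacts [hU.2 a ha.1 β hβ hgt, ha.1]
  · intro hβ
    obtain ⟨a, ha, hge⟩ := R.exists_mem_minimals_le hU.1 hβ
    exact ⟨hU.1 hβ, a, ha, hge⟩

lemma isRootLowerSet_downClosure (A : Set V) : R.IsRootLowerSet (R.downClosure A) :=
  ⟨fun _ hβ => hβ.1, fun _ ⟨_, a, ha, hge⟩ _ hβ hgt => ⟨hβ, a, ha, hge.trans hgt.ge⟩⟩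

lemma isRootUpperSet_upClosure (A : Set V) : R.IsRootUpperSet (R.upClosure A) :=
  ⟨fun _ hβ => hβ.1, fun _ ⟨_, a, ha, hge⟩ _ hβ hgt => ⟨hβ, a, ha, hgt.ge.trans hge⟩⟩

theorem bijOn_maximals :
    Set.BijOn R.maximals {L | R.IsRootLowerSet L} {A | R.IsRootAntichain A} :=
  Set.InvOn.bijOn ⟨fun _ hL => R.downClosure_maximals hL, fun _ hA => R.maximals_downClosure hA⟩
    (fun _ hL => R.isRootAntichain_maximals hL.1)
    (fun A _ => R.isRootLowerSet_downClosure A)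

theorem bijOn_minimals :
    Set.BijOn R.minimals {U | R.IsRootUpperSet U} {A | R.IsRootAntichain A} :=
  Set.InvOn.bijOn ⟨fun _ hU => R.upClosure_minimals hU, fun _ hA => R.minimals_upClosure hA⟩
    (fun _ hU => R.isRootAntichain_minimals hU.1)
    (fun A _ => R.isRootUpperSet_upClosure A)

theorem bijOn_pos_sdiff :
    Set.BijOn ((R.pos : Set V) \ ·) {L | R.IsRootLowerSet L} {U | R.IsRootUpperSet U} :=
  Set.InvOn.bijOn
    ⟨fun _ hL => Set.sdiff_sdiff_cancel_left hL.1, fun _ hU => Set.sdiff_sdiff_cancel_left hU.1⟩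
    (fun _ hL => ⟨Set.sdiff_subset, fun γ hγ β hβ hgt =>
      ⟨hβ, fun hβL => hγ.2 (hL.2 β hβL γ hγ.1 hgt)⟩⟩)
    (fun _ hU => ⟨Set.sdiff_subset, fun γ hγ β hβ hgt =>
      ⟨hβ, fun hβU => hγ.2 (hU.2 β hβU γ hγ.1 hgt)⟩⟩)

end RootSystemData

theorem statement1_general {V : Type} [NormedAddCommGroup V] [InnerProductSpace ℝ V]
    (R : RootSystemData V) :
    (∀ F : Set V, R.IsRegion F →
      R.IsRootAntichain (R.deltaLow F) ∧ R.IsRootAntichain (R.deltaHigh F)) ∧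
    Set.BijOn R.deltaLow {F | R.IsRegion F} {A | R.IsRootAntichain A} ∧
    Set.BijOn R.deltaHigh {F | R.IsRegion F} {A | R.IsRootAntichain A} := by
  have hLow : Set.BijOn R.deltaLow {F | R.IsRegion F} {A | R.IsRootAntichain A} :=
    R.bijOn_maximals.comp R.bijOn_ltOne
  have hHigh : Set.BijOn R.deltaHigh {F | R.IsRegion F} {A | R.IsRootAntichain A} :=
    (R.bijOn_minimals.comp (R.bijOn_pos_sdiff.comp R.bijOn_ltOne)).congr
      fun F (hF : R.IsRegion F) => congrArg R.minimals hF.gtOne_eq.symm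
  exact ⟨fun F hF => ⟨hLow.mapsTo hF, hHigh.mapsTo hF⟩, hLow, hHigh⟩

/-- For every region `F`, `δ(F)` and `δ'(F)` are antichains, and
`F ↦ δ(F)`, `F ↦ δ'(F)` are bijections between regions and antichains. -/
theorem statement1 {V : Type} [NormedAddCommGroup V] [InnerProductSpace ℝ V]
    [FiniteDimensional ℝ V] (R : RootSystemData V) :
    (∀ F : Set V, R.IsRegion F →
      R.IsRootAntichain (R.deltaLow F) ∧ R.IsRootAntichain (R.deltaHigh F)) ∧
    Set.BijOn R.deltaLow {F | R.IsRegion F} {A | R.IsRootAntichain A} ∧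
    Set.BijOn R.deltaHigh {F | R.IsRegion F} {A | R.IsRootAntichain A} :=
  statement1_general R
end

section
/- Let F be a region, χ ∈ F, and α ∈ Π a simple root with ⟨α,χ⟩ > 1. Let ω_α ∈ V be the fundamental coweight of α, i.e., the unique vector with ⟨α,ω_α⟩ = 1 and ⟨β,ω_α⟩ = 0 for all simple roots β ≠ α. Then χ + t·ω_α ∈ F for every real t ≥ 0; in particular F is unbounded. -/
open scoped RealInnerProductSpace

/-- If `χ ∈ F` and `⟨α,χ⟩ > 1` for a simple root `α`, then the ray
`χ + t·ω_α`, `t ≥ 0`, stays in `F`; in particular `F` is unbounded. -/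
theorem statement4 {V : Type} [NormedAddCommGroup V] [InnerProductSpace ℝ V]
    [FiniteDimensional ℝ V] (R : RootSystemData V)
    (F : Set V) (hF : R.IsRegion F) (χ : V) (hχ : χ ∈ F)
    (α : V) (hα : α ∈ R.simples) (h1 : 1 < ⟪α, χ⟫)
    (ω : V) (hω1 : ⟪α, ω⟫ = 1) (hω2 : ∀ β ∈ R.simples, β ≠ α → ⟪β, ω⟫ = 0) :
    (∀ t : ℝ, 0 ≤ t → χ + t • ω ∈ F) ∧ ¬ Bornology.IsBounded F := by
  classical
  obtain ⟨χ₀, hχ₀, hFeq⟩ := hF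
  have hχc : χ ∈ R.chamberSet := by
    rw [hFeq] at hχ; exact connectedComponentIn_subset _ _ hχ
  have hFeq' : F = connectedComponentIn R.chamberSet χ := by
    rw [hFeq]; exact connectedComponentIn_eq (hFeq ▸ hχ)
  have key : ∀ β ∈ R.pos, ∃ n : ℕ, ⟪β, ω⟫ = (n : ℝ) ∧ (0 < n → 1 < ⟪β, χ⟫) := by
    intro β hβ
    obtain ⟨c, hsupp, hsum⟩ := R.pos_sum_of_simples β hβ
    refine ⟨c α, ?_, ?_⟩
    · rw [hsum, Finsupp.sum, sum_inner]
      have hcong : ∀ a ∈ c.support, ⟪((c a : ℝ)) • a, ω⟫ = if a = α then (c a : ℝ) else 0 := by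
        intro a ha
        rw [real_inner_smul_left]
        by_cases h : a = α
        · simp [h, hω1]
        · simp [h, hω2 a (hsupp ha) h]
      rw [Finset.sum_congr rfl hcong, Finset.sum_ite_eq' c.support α]
      by_cases h : α ∈ c.support
      · simp [h]
      · simp [h, Finsupp.notMem_support_iff.mp h]
    · intro hn
      have hαs : α ∈ c.support := Finsupp.mem_support_iff.mpr (by omega)
      have hterms : ∀ a ∈ c.support, (0 : ℝ) ≤ ⟪((c a : ℝ)) • a, χ⟫ := by
        intro a ha
        rw [real_inner_smul_left]
        exact mul_nonneg (Nat.cast_nonneg _) (le_of_lt (hχc.1 a (hsupp ha)))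
      have hsingle : ⟪((c α : ℝ)) • α, χ⟫ ≤ ∑ a ∈ c.support, ⟪((c a : ℝ)) • a, χ⟫ :=
        Finset.single_le_sum hterms hαs
      have hβχ : ⟪β, χ⟫ = ∑ a ∈ c.support, ⟪((c a : ℝ)) • a, χ⟫ := by
        rw [hsum, Finsupp.sum, sum_inner]
      have h1c : (1 : ℝ) ≤ (c α : ℝ) := by exact_mod_cast Nat.one_le_cast.mpr hn
      have : (1 : ℝ) < ⟪((c α : ℝ)) • α, χ⟫ := by
        rw [real_inner_smul_left]
        calc (1 : ℝ) < ⟪α, χ⟫ := h1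
          _ = 1 * ⟪α, χ⟫ := by ring
          _ ≤ (c α : ℝ) * ⟪α, χ⟫ :=
            mul_le_mul_of_nonneg_right h1c (le_of_lt (lt_trans one_pos h1))
      rw [hβχ]; linarith
  have hray : ∀ t : ℝ, 0 ≤ t → χ + t • ω ∈ R.chamberSet := by
    intro t ht
    constructor
    · intro γ hγ
      rw [inner_add_right, real_inner_smul_right]
      have hγω : 0 ≤ ⟪γ, ω⟫ := by
        by_cases h : γ = α
        · rw [h, hω1]; norm_num
        · rw [hω2 γ hγ h]
      have := hχc.1 γ hγ
      nlinarith [mul_nonneg ht hγω]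
    · intro β hβ
      obtain ⟨n, hnω, hnχ⟩ := key β hβ
      rw [inner_add_right, real_inner_smul_right, hnω]
      rcases Nat.eq_zero_or_pos n with h | h
      · simp only [h, Nat.cast_zero, mul_zero, add_zero]
        exact hχc.2 β hβ
      · have h1' := hnχ h
        have : (0 : ℝ) ≤ t * n := mul_nonneg ht (Nat.cast_nonneg _)
        intro hcontra; linarith
  have hraymem : ∀ t : ℝ, 0 ≤ t → χ + t • ω ∈ F := by
    intro t ht
    rw [hFeq']
    have hcont : Continuous fun s : ℝ => χ + s • ω := by continuity
    have hconn : IsPreconnected ((fun s : ℝ => χ + s • ω) '' Set.Icc 0 t) :=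
      isPreconnected_Icc.image _ hcont.continuousOn
    have hsub : ((fun s : ℝ => χ + s • ω) '' Set.Icc 0 t) ⊆ R.chamberSet := by
      rintro _ ⟨s, hs, rfl⟩
      exact hray s hs.1
    have hχmem : χ ∈ ((fun s : ℝ => χ + s • ω) '' Set.Icc 0 t) :=
      ⟨0, ⟨le_refl 0, ht⟩, by simp⟩
    exact hconn.subset_connectedComponentIn hχmem hsub ⟨t, ⟨ht, le_refl t⟩, rfl⟩
  refine ⟨hraymem, ?_⟩
  intro hbdd
  obtain ⟨C, hC⟩ := (isBounded_iff_forall_norm_le).mp hbdd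
  have hω0 : ω ≠ 0 := by
    intro h; rw [h, inner_zero_right] at hω1; norm_num at hω1
  have hωpos : 0 < ‖ω‖ := norm_pos_iff.mpr hω0
  set t : ℝ := (|C| + ‖χ‖ + 1) / ‖ω‖ with ht_def
  have ht : 0 ≤ t := by positivity
  have hmem := hraymem t ht
  have hnorm : ‖χ + t • ω‖ ≤ C := hC _ hmem
  have h2 : ‖t • ω‖ - ‖χ‖ ≤ ‖χ + t • ω‖ := by
    have h := norm_le_add_norm_add (t • ω) χ
    have h' : ‖t • ω + χ‖ = ‖χ + t • ω‖ := by rw [add_comm]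
    linarith [h, h'.le, h'.ge]
  have h3 : ‖t • ω‖ = |C| + ‖χ‖ + 1 := by
    rw [norm_smul, Real.norm_eq_abs, abs_of_nonneg ht, ht_def,
      div_mul_cancel₀ _ (ne_of_gt hωpos)]
  have : C ≤ |C| := le_abs_self C
  linarith
end

section
/- Assume Δ is simply laced. Let F be a region, β ∈ δ(F) and β' ∈ δ'(F) with β < β'. Then β' − β is a simple root. -/
open scoped RealInnerProductSpace

section Helpers

variable {V : Type} [NormedAddCommGroup V] [InnerProductSpace ℝ V]
variable (R : RootSystemData V)

lemma aux_pos_ne_zero {z : V} (hz : z ∈ R.pos) : z ≠ 0 := by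
  intro h
  exact R.zero_not_mem (h ▸ R.pos_subset hz)

lemma aux_inner_pos {z χ : V} (hz : z ∈ R.pos) (hχ : χ ∈ R.chamberSet) :
    0 < ⟪z, χ⟫ := by
  obtain ⟨c, hsupp, hrep⟩ := R.pos_sum_of_simples z hz
  have hc0 : c ≠ 0 := by
    rintro rfl
    exact aux_pos_ne_zero R hz (by simpa using hrep)
  obtain ⟨t, ht⟩ := Finsupp.support_nonempty_iff.2 hc0
  have hexp : ⟪z, χ⟫ = ∑ a ∈ c.support, (c a : ℝ) * ⟪a, χ⟫ := by
    rw [hrep, Finsupp.sum, sum_inner]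
    exact Finset.sum_congr rfl fun a _ => real_inner_smul_left _ _ _
  rw [hexp]
  apply Finset.sum_pos'
  · intro a ha
    exact mul_nonneg (Nat.cast_nonneg _) (le_of_lt (hχ.1 a (hsupp ha)))
  · refine ⟨t, ht, mul_pos ?_ (hχ.1 t (hsupp ht))⟩
    exact_mod_cast Nat.pos_of_ne_zero (Finsupp.mem_support_iff.1 ht)

lemma aux_inner_msum_pos {m : Multiset V} (hm : m ≠ 0) (hpos : ∀ z ∈ m, z ∈ R.pos)
    {χ : V} (hχ : χ ∈ R.chamberSet) : 0 < ⟪m.sum, χ⟫ := by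
  induction m using Multiset.induction_on with
  | empty => simp at hm
  | cons a s ih =>
    rw [Multiset.sum_cons, inner_add_left]
    have h1 := aux_inner_pos R (hpos a (Multiset.mem_cons_self a s)) hχ
    rcases eq_or_ne s 0 with rfl | hs
    · simpa using h1
    · have h2 := ih hs (fun z hz => hpos z (Multiset.mem_cons_of_mem hz))
      linarith

lemma aux_gt_inner {x y : V} (h : R.Gt x y) {χ : V} (hχ : χ ∈ R.chamberSet) :
    ⟪y, χ⟫ < ⟪x, χ⟫ := by
  obtain ⟨m, hm0, hmp, hms⟩ := h
  have := aux_inner_msum_pos R hm0 hmp hχ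
  rw [← hms, inner_sub_left] at this
  linarith

lemma aux_mem_pos {μ χ : V} (hμ : μ ∈ R.roots) (hχ : χ ∈ R.chamberSet)
    (h : 0 < ⟪μ, χ⟫) : μ ∈ R.pos := by
  rcases R.mem_pos_or_neg_mem_pos μ hμ with h' | h'
  · exact h'
  · have := aux_inner_pos R h' hχ
    rw [inner_neg_left] at this
    linarith

lemma aux_int (hSL : R.SimplyLaced) {a b : V} (ha : a ∈ R.roots) (hb : b ∈ R.roots) :
    ∃ n : ℤ, ⟪a, b⟫ = (n : ℝ) := by
  obtain ⟨n, hn⟩ := R.crystallographic a ha b hb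
  refine ⟨n, ?_⟩
  rw [hSL b hb] at hn
  linarith

lemma aux_expand_sub (a b : V) : ⟪a - b, a - b⟫ = ⟪a, a⟫ - 2 * ⟪a, b⟫ + ⟪b, b⟫ := by
  rw [inner_sub_left, inner_sub_right, inner_sub_right, real_inner_comm b a]
  ring

lemma aux_expand_add (a b : V) : ⟪a + b, a + b⟫ = ⟪a, a⟫ + 2 * ⟪a, b⟫ + ⟪b, b⟫ := by
  rw [inner_add_left, inner_add_right, inner_add_right, real_inner_comm b a]
  ring

lemma aux_sub_root (hSL : R.SimplyLaced) {a b : V} (ha : a ∈ R.roots) (hb : b ∈ R.roots)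
    (hne : a ≠ b) (hpos : 0 < ⟪a, b⟫) : ⟪a, b⟫ = 1 ∧ b - a ∈ R.roots := by
  obtain ⟨n, hn⟩ := aux_int R hSL ha hb
  have haa := hSL a ha
  have hbb := hSL b hb
  have hsubnn : (0:ℝ) ≤ ⟪a - b, a - b⟫ := real_inner_self_nonneg
  rw [aux_expand_sub] at hsubnn
  have hn1 : (1:ℤ) ≤ n := by
    have h0 : (0:ℝ) < (n:ℝ) := hn ▸ hpos
    have : (0:ℤ) < n := by exact_mod_cast h0
    omega
  have hn2 : n ≤ 2 := by
    have : (n:ℝ) ≤ 2 := by rw [← hn]; linarith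
    exact_mod_cast this
  have hone : ⟪a, b⟫ = 1 := by
    rcases eq_or_lt_of_le hn2 with h2 | h2
    · exfalso
      have hn2' : (n:ℝ) = 2 := by exact_mod_cast h2
      have hz : ⟪a - b, a - b⟫ = 0 := by
        rw [aux_expand_sub, hn, haa, hbb, hn2']; ring
      exact hne (sub_eq_zero.mp (inner_self_eq_zero.mp hz))
    · have : n = 1 := by omega
      rw [hn, this]; norm_num
  refine ⟨hone, ?_⟩
  have hmem := R.reflect_mem a ha b hb
  have hba : ⟪b, a⟫ = 1 := by rw [real_inner_comm]; exact hone
  have hc : 2 * ⟪b, a⟫ / ⟪a, a⟫ = 1 := by rw [hba, haa]; norm_num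
  rwa [hc, one_smul] at hmem

lemma aux_add_root (hSL : R.SimplyLaced) {a b : V} (ha : a ∈ R.roots) (hb : b ∈ R.roots)
    (hne : a ≠ -b) (hneg : ⟪a, b⟫ < 0) : a + b ∈ R.roots := by
  obtain ⟨n, hn⟩ := aux_int R hSL ha hb
  have haa := hSL a ha
  have hbb := hSL b hb
  have haddnn : (0:ℝ) ≤ ⟪a + b, a + b⟫ := real_inner_self_nonneg
  rw [aux_expand_add] at haddnn
  have hn1 : n ≤ -1 := by
    have h0 : (n:ℝ) < 0 := hn ▸ hneg
    have : n < (0:ℤ) := by exact_mod_cast h0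
    omega
  have hn2 : (-2:ℤ) ≤ n := by
    have : (-2:ℝ) ≤ (n:ℝ) := by rw [← hn]; linarith
    exact_mod_cast this
  have hone : ⟪a, b⟫ = -1 := by
    rcases eq_or_lt_of_le hn1 with h2 | h2
    · rw [hn, h2]; norm_num
    · exfalso
      have hn2' : (n:ℝ) = -2 := by exact_mod_cast (by omega : n = -2)
      have hz : ⟪a + b, a + b⟫ = 0 := by
        rw [aux_expand_add, hn, haa, hbb, hn2']; ring
      have h00 : a + b = 0 := inner_self_eq_zero.mp hz
      exact hne (neg_eq_of_add_eq_zero_left h00).symm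
  have hmem := R.reflect_mem a ha b hb
  have hba : ⟪b, a⟫ = -1 := by rw [real_inner_comm]; exact hone
  have hc : 2 * ⟪b, a⟫ / ⟪a, a⟫ = -1 := by rw [hba, haa]; norm_num
  rw [hc] at hmem
  rw [neg_smul, one_smul, sub_neg_eq_add, add_comm] at hmem
  exact hmem

end Helpers

set_option linter.unusedSectionVars false

section Helpers2

variable {V : Type} [NormedAddCommGroup V] [InnerProductSpace ℝ V]
variable (R : RootSystemData V)

lemma aux_support_add_subset {c d : V →₀ ℕ} {S : Set V}
    (hc : (c.support : Set V) ⊆ S) (hd : (d.support : Set V) ⊆ S) :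
    ((c + d).support : Set V) ⊆ S := by
  intro x hx
  have hne : c x + d x ≠ 0 := by
    have := Finsupp.mem_support_iff.1 (Finset.mem_coe.mp hx)
    rwa [Finsupp.add_apply] at this
  by_cases h : c x = 0
  · exact hd (Finsupp.mem_support_iff.2 (by omega))
  · exact hc (Finsupp.mem_support_iff.2 h)

lemma aux_coords_unique {c d : V →₀ ℕ}
    (hc : (c.support : Set V) ⊆ (R.simples : Set V))
    (hd : (d.support : Set V) ⊆ (R.simples : Set V))
    (h : c.sum (fun α n => (n : ℝ) • α) = d.sum (fun α n => (n : ℝ) • α)) : c = d := by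
  have hc' : c.support ⊆ R.simples := fun x hx => hc hx
  have hd' : d.support ⊆ R.simples := fun x hx => hd hx
  have hcs : c.sum (fun α n => (n:ℝ) • α) = ∑ t ∈ R.simples, (c t : ℝ) • t :=
    Finsupp.sum_of_support_subset c hc' _ (fun i _ => by simp)
  have hds : d.sum (fun α n => (n:ℝ) • α) = ∑ t ∈ R.simples, (d t : ℝ) • t :=
    Finsupp.sum_of_support_subset d hd' _ (fun i _ => by simp)
  have hsum : ∑ t ∈ R.simples, ((c t : ℝ) - (d t : ℝ)) • t = 0 := by
    have : ∑ t ∈ R.simples, ((c t : ℝ) • t - (d t : ℝ) • t) = 0 := by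
      rw [Finset.sum_sub_distrib, ← hcs, ← hds, h, sub_self]
    rw [← this]
    exact Finset.sum_congr rfl fun t _ => (sub_smul _ _ _)
  have key : ∀ t ∈ R.simples, (c t : ℝ) - (d t : ℝ) = 0 := by
    have li := linearIndependent_iff'.mp R.simples_linearIndependent
    have hsum' : ∑ a : {x // x ∈ R.simples}, ((c a : ℝ) - (d a : ℝ)) • (a : V) = 0 := by
      rw [Finset.sum_coe_sort R.simples (fun t => ((c t : ℝ) - (d t : ℝ)) • t)]
      exact hsum
    intro t ht
    exact li Finset.univ (fun a => (c a : ℝ) - (d a : ℝ)) hsum' ⟨t, ht⟩ (Finset.mem_univ _)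
  ext t
  by_cases ht : t ∈ R.simples
  · have := key t ht
    have : (c t : ℝ) = (d t : ℝ) := by linarith
    exact_mod_cast this
  · have h1 : c t = 0 := by
      by_contra h'
      exact ht (hc' (Finsupp.mem_support_iff.2 h'))
    have h2 : d t = 0 := by
      by_contra h'
      exact ht (hd' (Finsupp.mem_support_iff.2 h'))
    rw [h1, h2]

lemma aux_coords_of_pos {z : V} (hz : z ∈ R.pos) :
    ∃ c : V →₀ ℕ, (c.support : Set V) ⊆ (R.simples : Set V) ∧
      z = c.sum (fun α n => (n : ℝ) • α) ∧ 1 ≤ c.sum (fun _ n => n) := by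
  obtain ⟨c, h1, h2⟩ := R.pos_sum_of_simples z hz
  refine ⟨c, h1, h2, ?_⟩
  have hc0 : c ≠ 0 := by
    rintro rfl
    exact aux_pos_ne_zero R hz (by simpa using h2)
  obtain ⟨t, ht⟩ := Finsupp.support_nonempty_iff.2 hc0
  calc 1 ≤ c t := Nat.pos_of_ne_zero (Finsupp.mem_support_iff.1 ht)
    _ ≤ c.sum (fun _ n => n) := Finset.single_le_sum (fun _ _ => Nat.zero_le _) ht

lemma aux_coords_of_msum {m : Multiset V} (hm : ∀ z ∈ m, z ∈ R.pos) :
    ∃ c : V →₀ ℕ, (c.support : Set V) ⊆ (R.simples : Set V) ∧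
      m.sum = c.sum (fun α n => (n : ℝ) • α) ∧ Multiset.card m ≤ c.sum (fun _ n => n) := by
  induction m using Multiset.induction_on with
  | empty => exact ⟨0, by simp, by simp, by simp⟩
  | cons a s ih =>
    obtain ⟨c1, h11, h12, h13⟩ := aux_coords_of_pos R (hm a (Multiset.mem_cons_self a s))
    obtain ⟨c2, h21, h22, h23⟩ := ih (fun z hz => hm z (Multiset.mem_cons_of_mem hz))
    refine ⟨c1 + c2, ?_, ?_, ?_⟩
    · exact aux_support_add_subset h11 h21
    · rw [Multiset.sum_cons, h12, h22, Finsupp.sum_add_index']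
      · intro i; simp
      · intro i b₁ b₂; push_cast; rw [add_smul]
    · rw [Multiset.card_cons, Finsupp.sum_add_index' (fun _ => rfl) (fun _ _ _ => rfl)]
      omega

lemma aux_no_gt_simple {s b : V} (hs : s ∈ R.simples) (hb : b ∈ R.pos) (h : R.Gt s b) :
    False := by
  obtain ⟨m, hm0, hmp, hms⟩ := h
  obtain ⟨c1, h11, h12, h13⟩ := aux_coords_of_pos R hb
  obtain ⟨c2, h21, h22, h23⟩ := aux_coords_of_msum R hmp
  have hcard : 1 ≤ Multiset.card m := Multiset.card_pos.2 hm0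
  have hsupp : ((c1 + c2).support : Set V) ⊆ (R.simples : Set V) :=
    aux_support_add_subset h11 h21
  have hadd : (c1 + c2).sum (fun α n => (n:ℝ) • α)
      = c1.sum (fun α n => (n:ℝ) • α) + c2.sum (fun α n => (n:ℝ) • α) :=
    Finsupp.sum_add_index' (fun i => by simp) (fun i b₁ b₂ => by push_cast; rw [add_smul])
  have hrep : (c1 + c2).sum (fun α n => (n:ℝ) • α) = s := by
    rw [hadd, ← h12, ← h22, ← hms]
    abel
  have hsingle : (Finsupp.single s (1:ℕ)).sum (fun (α : V) (n : ℕ) => (n:ℝ) • α) = s := by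
    rw [Finsupp.sum_single_index (by simp)]
    simp
  have huniq : c1 + c2 = Finsupp.single s (1:ℕ) := by
    apply aux_coords_unique R hsupp ?_ (by rw [hrep, hsingle])
    intro x hx
    have := Finsupp.support_single_subset (Finset.mem_coe.mp hx)
    rw [Finset.mem_singleton] at this
    rw [this]
    exact hs
  have htot : (c1 + c2).sum (fun (_ : V) (n : ℕ) => n) = 1 := by
    rw [huniq, Finsupp.sum_single_index rfl]
  rw [Finsupp.sum_add_index' (fun _ => rfl) (fun _ _ _ => rfl)] at htot
  omega

end Helpers2

section Helpers3

variable {V : Type} [NormedAddCommGroup V] [InnerProductSpace ℝ V]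
variable (R : RootSystemData V)

lemma aux_inner_msum (x : V) (m : Multiset V) :
    ⟪x, m.sum⟫ = (m.map (fun z => ⟪x, z⟫)).sum := by
  induction m using Multiset.induction_on with
  | empty => simp
  | cons a s ih => simp [inner_add_right, ih]

lemma aux_sign {F : Set V} (hF : R.IsRegion F) {μ : V} (hμ : μ ∈ R.pos) :
    (∀ χ ∈ F, ⟪μ, χ⟫ < 1) ∨ (∀ χ ∈ F, 1 < ⟪μ, χ⟫) := by
  obtain ⟨χ₀, hχ₀, rfl⟩ := hF
  have hsub := connectedComponentIn_subset R.chamberSet χ₀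
  have hconn : IsPreconnected (connectedComponentIn R.chamberSet χ₀) :=
    isPreconnected_connectedComponentIn
  have hne : ∀ χ ∈ connectedComponentIn R.chamberSet χ₀, ⟪μ, χ⟫ ≠ 1 :=
    fun χ hχ => (hsub hχ).2 μ hμ
  by_contra hcon
  push_neg at hcon
  obtain ⟨⟨χ₁, hχ₁, h1⟩, ⟨χ₂, hχ₂, h2⟩⟩ := hcon
  have hf : ContinuousOn (fun χ : V => ⟪μ, χ⟫) (connectedComponentIn R.chamberSet χ₀) :=
    (Continuous.inner continuous_const continuous_id).continuousOn
  have hIcc := hconn.intermediate_value hχ₂ hχ₁ hf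
  have h1' : 1 < ⟪μ, χ₁⟫ := lt_of_le_of_ne h1 (hne χ₁ hχ₁).symm
  have h2' : ⟪μ, χ₂⟫ < 1 := lt_of_le_of_ne h2 (hne χ₂ hχ₂)
  obtain ⟨χ, hχ, hval⟩ := hIcc ⟨le_of_lt h2', le_of_lt h1'⟩
  exact hne χ hχ hval

lemma aux_msum_nonpos (l : Multiset ℝ) (h : ∀ x ∈ l, x ≤ 0) : l.sum ≤ 0 := by
  induction l using Multiset.induction_on with
  | empty => simp
  | cons a s ih =>
    rw [Multiset.sum_cons]
    have h1 := h a (Multiset.mem_cons_self a s)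
    have h2 := ih (fun x hx => h x (Multiset.mem_cons_of_mem hx))
    linarith

end Helpers3

/-- In the simply laced case, if `β ∈ δ(F)`, `β' ∈ δ'(F)` and `β < β'`, then
`β' - β` is a simple root. -/
theorem statement11 {V : Type} [NormedAddCommGroup V] [InnerProductSpace ℝ V]
    [FiniteDimensional ℝ V] (R : RootSystemData V) (hSL : R.SimplyLaced)
    (F : Set V) (hF : R.IsRegion F)
    (β β' : V) (hβ : β ∈ R.deltaLow F) (hβ' : β' ∈ R.deltaHigh F)
    (hlt : R.Gt β' β) :
    β' - β ∈ R.simples := by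
  classical
  obtain ⟨χ₀, hχ₀c, hFeq⟩ := id hF
  have hβpos : β ∈ R.pos := hβ.1.1
  have hβ'pos : β' ∈ R.pos := hβ'.1.1
  have hβr : β ∈ R.roots := R.pos_subset hβpos
  have hβ'r : β' ∈ R.roots := R.pos_subset hβ'pos
  have noB : ∀ μ, μ ∈ R.roots → R.Gt μ β → R.Gt β' μ → False := by
    intro μ hμr h1 h2
    have hμpos : μ ∈ R.pos := by
      apply aux_mem_pos R hμr hχ₀c
      have ha := aux_gt_inner R h1 hχ₀c
      have hb := aux_inner_pos R hβpos hχ₀c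
      linarith
    rcases aux_sign R hF hμpos with hs | hs
    · exact hβ.2 μ ⟨hμpos, hs⟩ h1
    · exact hβ'.2 μ ⟨hμpos, hs⟩ h2
  have hne : β' ≠ β := by
    intro h
    have := aux_gt_inner R hlt hχ₀c
    rw [h] at this
    exact lt_irrefl _ this
  obtain ⟨m, hm0, hmp, hms⟩ := id hlt
  -- Step A : β' - β is a positive root
  have hA : β' - β ∈ R.pos := by
    by_cases hk : Multiset.card m = 1
    · obtain ⟨a, rfl⟩ := Multiset.card_eq_one.mp hk
      rw [hms, Multiset.sum_singleton]
      exact hmp a (Multiset.mem_singleton_self a)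
    · exfalso
      have hk2 : 2 ≤ Multiset.card m := by
        have := Multiset.card_pos.2 hm0
        omega
      have hip : 0 < ⟪β' - β, β' - β⟫ := by
        rcases eq_or_lt_of_le (real_inner_self_nonneg (x := β' - β)) with h | h
        · exact absurd (inner_self_eq_zero.mp h.symm) (sub_ne_zero.2 hne)
        · exact h
      have hex : ∃ a ∈ m, 0 < ⟪β' - β, a⟫ := by
        by_contra hcon
        push_neg at hcon
        have hle : ((m.map (fun z => ⟪β' - β, z⟫)).sum : ℝ) ≤ 0 := by
          apply aux_msum_nonpos
          intro x hx
          obtain ⟨a, ha, rfl⟩ := Multiset.mem_map.mp hx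
          exact hcon a ha
        rw [← aux_inner_msum, ← hms] at hle
        linarith
      obtain ⟨a, ham, hap⟩ := hex
      have hapos : a ∈ R.pos := hmp a ham
      have har : a ∈ R.roots := R.pos_subset hapos
      have herase0 : m.erase a ≠ 0 := by
        intro h0
        have hc := Multiset.card_erase_of_mem ham
        rw [h0] at hc
        simp at hc
        omega
      have heraseel : ∀ z ∈ m.erase a, z ∈ R.pos :=
        fun z hz => hmp z (Multiset.mem_of_mem_erase hz)
      have h1 : β' - β = a + (m.erase a).sum := by
        rw [hms, ← Multiset.sum_cons, Multiset.cons_erase ham]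
      rw [inner_sub_left] at hap
      by_cases hba : ⟪β, a⟫ < 0
      · have hanb : a ≠ -β := by
          intro h
          have p1 := aux_inner_pos R hapos hχ₀c
          have p2 := aux_inner_pos R hβpos hχ₀c
          rw [h, inner_neg_left] at p1
          linarith
        have hab : ⟪a, β⟫ < 0 := by rwa [real_inner_comm]
        have hroot : a + β ∈ R.roots := aux_add_root R hSL har hβr hanb hab
        apply noB (β + a) (by rwa [add_comm])
        · exact ⟨{a}, by simp, fun z hz => by rwa [Multiset.mem_singleton.mp hz], by simp⟩
        · refine ⟨m.erase a, herase0, heraseel, ?_⟩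
          calc β' - (β + a) = β' - β - a := by abel
            _ = (m.erase a).sum := by rw [h1]; abel
      · have hb'a : 0 < ⟪β', a⟫ := by push_neg at hba; linarith
        have hanb' : a ≠ β' := by
          intro h
          rw [h] at h1
          have h3 : (m.erase β').sum + β = 0 := by
            calc (m.erase β').sum + β = β' + (m.erase β').sum - (β' - β) := by abel
              _ = 0 := by rw [h1]; abel
          have p1 := aux_inner_msum_pos R (h ▸ herase0) (h ▸ heraseel) hχ₀c
          have p2 := aux_inner_pos R hβpos hχ₀c
          have p3 : ⟪(m.erase β').sum + β, χ₀⟫ = 0 := by rw [h3, inner_zero_left]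
          rw [inner_add_left] at p3
          linarith
        have hsub := aux_sub_root R hSL har hβ'r hanb' (by rwa [real_inner_comm])
        apply noB (β' - a) hsub.2
        · refine ⟨m.erase a, herase0, heraseel, ?_⟩
          calc β' - a - β = β' - β - a := by abel
            _ = (m.erase a).sum := by rw [h1]; abel
        · exact ⟨{a}, by simp, fun z hz => by rwa [Multiset.mem_singleton.mp hz], by simp⟩
  -- Step B : β' - β is simple
  set α := β' - β with hαdef
  have hαr : α ∈ R.roots := R.pos_subset hA
  by_contra hns
  obtain ⟨c, hcsupp, hcrep, -⟩ := aux_coords_of_pos R hA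
  have hh : ⟪c.sum (fun α n => (n:ℝ) • α), α⟫ = ∑ t ∈ c.support, (c t : ℝ) * ⟪t, α⟫ := by
    rw [Finsupp.sum, sum_inner]
    exact Finset.sum_congr rfl fun t _ => real_inner_smul_left _ _ _
  have hexp : ∑ t ∈ c.support, (c t : ℝ) * ⟪t, α⟫ = 2 := by
    rw [← hh, ← hcrep, hSL α hαr]
  have hex : ∃ t ∈ c.support, 0 < (c t : ℝ) * ⟪t, α⟫ := by
    by_contra hcon
    push_neg at hcon
    have := Finset.sum_nonpos hcon
    rw [hexp] at this
    linarith
  obtain ⟨t, htsupp, htpos⟩ := hex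
  have hts : t ∈ R.simples := hcsupp htsupp
  have htposR : t ∈ R.pos := R.simples_subset hts
  have htr : t ∈ R.roots := R.pos_subset htposR
  have htα : 0 < ⟪t, α⟫ := by
    by_contra hle
    push_neg at hle
    nlinarith [(Nat.cast_nonneg (c t) : (0:ℝ) ≤ (c t : ℝ))]
  have htne : t ≠ α := fun h => hns (h ▸ hts)
  obtain ⟨hone, hγr⟩ := aux_sub_root R hSL htr hαr htne htα
  have hγpos : α - t ∈ R.pos := by
    rcases R.mem_pos_or_neg_mem_pos _ hγr with h | h
    · exact h
    · exfalso
      apply aux_no_gt_simple R hts hA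
      refine ⟨{t - α}, by simp, fun z hz => ?_, by simp⟩
      rw [Multiset.mem_singleton.mp hz]
      rw [show t - α = -(α - t) from by abel]
      exact h
  have hβ'β : ⟪β', β⟫ = 1 := by
    have h2 : ⟪α, α⟫ = 2 := hSL α hαr
    rw [hαdef, aux_expand_sub, hSL β' hβ'r, hSL β hβr] at h2
    linarith
  have hαβ : ⟪α, β⟫ = -1 := by
    rw [hαdef, inner_sub_left, hβ'β, hSL β hβr]
    norm_num
  have hsplit : ⟪t, β⟫ + ⟪α - t, β⟫ = -1 := by
    rw [← inner_add_left, show t + (α - t) = α from by abel]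
    exact hαβ
  have key : ∀ δ₁ δ₂ : V, δ₁ ∈ R.pos → δ₂ ∈ R.pos → δ₁ + δ₂ = α → ⟪δ₁, β⟫ < 0 → False := by
    intro δ₁ δ₂ h₁ h₂ hsumδ hneg
    have hδ₁r : δ₁ ∈ R.roots := R.pos_subset h₁
    have hδnb : δ₁ ≠ -β := by
      intro h
      have p1 := aux_inner_pos R h₁ hχ₀c
      have p2 := aux_inner_pos R hβpos hχ₀c
      rw [h, inner_neg_left] at p1
      linarith
    have hroot := aux_add_root R hSL hδ₁r hβr hδnb hneg
    apply noB (β + δ₁) (by rwa [add_comm])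
    · exact ⟨{δ₁}, by simp, fun z hz => by rwa [Multiset.mem_singleton.mp hz], by simp⟩
    · refine ⟨{δ₂}, by simp, fun z hz => by rwa [Multiset.mem_singleton.mp hz], ?_⟩
      rw [Multiset.sum_singleton]
      calc β' - (β + δ₁) = β' - β - δ₁ := by abel
        _ = δ₂ := by rw [← hαdef, ← hsumδ]; abel
  rcases lt_or_ge ⟪t, β⟫ 0 with h | h
  · exact key t (α - t) htposR hγpos (by abel) h
  · have hlt2 : ⟪α - t, β⟫ < 0 := by linarith
    exact key (α - t) t hγpos htposR (by abel) hlt2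
end

section
/- Assume Δ is simply laced. There do not exist positive roots β₁, β₂, β₁', β₂' and simple roots α₁, α₂, α₃, α₄ ∈ Π such that ⟨β₁,β₂⟩ = 0, ⟨β₁',β₂'⟩ = 0, β₁' = β₁ + α₁ = β₂ + α₂, and β₂' = β₁ + α₃ = β₂ + α₄. -/
open scoped RealInnerProductSpace

/-- In the simply laced case there is no configuration of positive roots
`β₁ ⊥ β₂`, `β₁' ⊥ β₂'` and simple roots `α₁, α₂, α₃, α₄` with
`β₁' = β₁ + α₁ = β₂ + α₂` and `β₂' = β₁ + α₃ = β₂ + α₄`. -/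
theorem statement12 {V : Type} [NormedAddCommGroup V] [InnerProductSpace ℝ V]
    [FiniteDimensional ℝ V] (R : RootSystemData V) (hSL : R.SimplyLaced) :
    ¬ ∃ (β₁ β₂ β₁' β₂' α₁ α₂ α₃ α₄ : V),
      β₁ ∈ R.pos ∧ β₂ ∈ R.pos ∧ β₁' ∈ R.pos ∧ β₂' ∈ R.pos ∧
      α₁ ∈ R.simples ∧ α₂ ∈ R.simples ∧ α₃ ∈ R.simples ∧ α₄ ∈ R.simples ∧
      ⟪β₁, β₂⟫ = 0 ∧ ⟪β₁', β₂'⟫ = 0 ∧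
      β₁' = β₁ + α₁ ∧ β₁' = β₂ + α₂ ∧ β₂' = β₁ + α₃ ∧ β₂' = β₂ + α₄ := by
  rintro ⟨β₁, β₂, β₁', β₂', α₁, α₂, α₃, α₄, hb1, hb2, hb1', hb2', ha1, ha2, ha3, ha4,
    horth, horth', h11, h12, h21, h22⟩
  have rb1 := hSL β₁ (R.pos_subset hb1)
  have rb2 := hSL β₂ (R.pos_subset hb2)
  have rb1' := hSL β₁' (R.pos_subset hb1')
  have rb2' := hSL β₂' (R.pos_subset hb2')
  have ra1 := hSL α₁ (R.pos_subset (R.simples_subset ha1))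
  have ra2 := hSL α₂ (R.pos_subset (R.simples_subset ha2))
  have ra3 := hSL α₃ (R.pos_subset (R.simples_subset ha3))
  have ra4 := hSL α₄ (R.pos_subset (R.simples_subset ha4))
  -- ⟪β₁, α₁⟫ = -1 etc.
  have e1 : ⟪β₁, α₁⟫ = -1 := by
    have h := rb1'
    rw [h11, real_inner_add_add_self] at h
    linarith
  have e3 : ⟪β₁, α₃⟫ = -1 := by
    have h := rb2'
    rw [h21, real_inner_add_add_self] at h
    linarith
  -- ⟪α₁, α₃⟫ = 0 from orthogonality of β₁', β₂'
  have o13 : ⟪α₁, α₃⟫ = 0 := by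
    have h := horth'
    rw [h11, h21, inner_add_left, inner_add_right, inner_add_right,
      real_inner_comm β₁ α₁] at h
    linarith
  -- β₁ - β₂ = α₂ - α₁ = α₄ - α₃
  have d1 : α₂ - α₁ = β₁ - β₂ := by
    have h : β₁ + α₁ = β₂ + α₂ := by rw [← h11, ← h12]
    exact sub_eq_sub_iff_add_eq_add.mpr (by rw [h]; abel)
  have d2 : α₄ - α₃ = β₁ - β₂ := by
    have h : β₁ + α₃ = β₂ + α₄ := by rw [← h21, ← h22]
    exact sub_eq_sub_iff_add_eq_add.mpr (by rw [h]; abel)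
  -- ⟪α₁, α₂⟫ = 0
  have o12 : ⟪α₁, α₂⟫ = 0 := by
    have h : ⟪α₂ - α₁, α₂ - α₁⟫ = ⟪β₁ - β₂, β₁ - β₂⟫ := by rw [d1]
    rw [real_inner_sub_sub_self, real_inner_sub_sub_self, real_inner_comm α₁ α₂] at h
    linarith
  -- key: ⟪α₄, α₁⟫ = -2
  have key : ⟪α₄, α₁⟫ = -2 := by
    have h : ⟪α₂ - α₁, α₁⟫ = ⟪α₄ - α₃, α₁⟫ := by rw [d1, d2]
    rw [inner_sub_left, inner_sub_left, real_inner_comm α₁ α₂,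
      real_inner_comm α₁ α₃] at h
    linarith
  -- hence α₄ = -α₁
  have hzero : α₁ + α₄ = 0 := by
    have h : ⟪α₁ + α₄, α₁ + α₄⟫ = 0 := by
      rw [real_inner_add_add_self, real_inner_comm α₄ α₁]
      linarith
    exact inner_self_eq_zero.mp h
  have hneg : α₄ = -α₁ := eq_neg_of_add_eq_zero_right hzero
  exact R.neg_not_pos α₁ (R.simples_subset ha1)
    (hneg ▸ R.simples_subset ha4)
end
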